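/- arXiv:2311.04523 — 10 statements merged into one kernel-verified Lean document; each statement's English description precedes it below -/
import Mathlib

section
/- Let f : H → ℝ be bounded and H_R-Lipschitz with constant L, i.e. |f(x + Rv) − f(x)| ≤ L‖v‖_H for all x ∈ H, v ∈ H. Then for every ε > 0 and every x ∈ H one has 0 ≤ f(x) − f_ε(x) ≤ 4εL², where f_ε is the Lasry–Lions approximation of f. -/
open Real
open scoped RealInnerProductSpace

/-- The Lasry–Lions approximation of `f` along the range of `R`:
`f_ε(x) := sup_v ( inf_u ( f(x + Ru − Rv) + ‖u‖²/(2ε) ) − ‖v‖²/ε )`. -/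
noncomputable def lasryLions {H : Type*} [NormedAddCommGroup H] [InnerProductSpace ℝ H]
    (R : H →L[ℝ] H) (f : H → ℝ) (ε : ℝ) (x : H) : ℝ :=
  ⨆ v : H, ((⨅ u : H, (f (x + R u - R v) + ‖u‖ ^ 2 / (2 * ε))) - ‖v‖ ^ 2 / ε)

/-!
Testing `v = u` in the inner infimum bounds every term of the supremum by `f x`, so
`f_ε ≤ f`. Conversely, for `v = 0` the Lipschitz bound along `R` gives
`f (x + R u) + ‖u‖²/(2ε) ≥ f x - L‖u‖ + ‖u‖²/(2ε) ≥ f x - εL²/2`, the minimum of the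
quadratic in `‖u‖` being attained at `‖u‖ = εL`. Hence `0 ≤ f - f_ε ≤ εL²/2`. The same
estimate at the base point `x - R v` bounds the inner infimum from below, so none of the
`⨅`/`⨆` takes its junk value.
-/

section LasryLions

variable {H : Type*} [NormedAddCommGroup H] [InnerProductSpace ℝ H]
  {R : H →L[ℝ] H} {f : H → ℝ} {L ε : ℝ}

theorem sub_le_add_sq_div_of_lipschitzAlong
    (hf : ∀ x v : H, |f (x + R v) - f x| ≤ L * ‖v‖) (hε : 0 < ε) (y u : H) :
    f y - ε * L ^ 2 / 2 ≤ f (y + R u) + ‖u‖ ^ 2 / (2 * ε) := by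
  have hlip : f y - L * ‖u‖ ≤ f (y + R u) := by linarith [(abs_le.1 (hf y u)).1]
  have hsq : 0 ≤ (‖u‖ - ε * L) ^ 2 / (2 * ε) := by positivity
  have hexpand : (‖u‖ - ε * L) ^ 2 / (2 * ε) = ‖u‖ ^ 2 / (2 * ε) - L * ‖u‖ + ε * L ^ 2 / 2 := by
    field_simp
    ring
  linarith

theorem bddBelow_lasryLions_inner
    (hf : ∀ x v : H, |f (x + R v) - f x| ≤ L * ‖v‖) (hε : 0 < ε) (x v : H) :
    BddBelow (Set.range fun u : H => f (x + R u - R v) + ‖u‖ ^ 2 / (2 * ε)) := by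
  refine ⟨f (x - R v) - ε * L ^ 2 / 2, ?_⟩
  rintro _ ⟨u, rfl⟩
  simpa only [sub_add_eq_add_sub] using sub_le_add_sq_div_of_lipschitzAlong hf hε (x - R v) u

theorem lasryLions_term_le
    (hf : ∀ x v : H, |f (x + R v) - f x| ≤ L * ‖v‖) (hε : 0 < ε) (x v : H) :
    (⨅ u : H, f (x + R u - R v) + ‖u‖ ^ 2 / (2 * ε)) - ‖v‖ ^ 2 / ε ≤ f x := by
  have hinf : (⨅ u : H, f (x + R u - R v) + ‖u‖ ^ 2 / (2 * ε)) ≤ f x + ‖v‖ ^ 2 / (2 * ε) := by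
    simpa only [add_sub_cancel_right] using ciInf_le (bddBelow_lasryLions_inner hf hε x v) v
  have hhalf : ‖v‖ ^ 2 / (2 * ε) ≤ ‖v‖ ^ 2 / ε :=
    div_le_div_of_nonneg_left (sq_nonneg _) hε (by linarith)
  linarith

theorem lasryLions_le
    (hf : ∀ x v : H, |f (x + R v) - f x| ≤ L * ‖v‖) (hε : 0 < ε) (x : H) :
    lasryLions R f ε x ≤ f x :=
  ciSup_le (lasryLions_term_le hf hε x)

theorem sub_le_lasryLions
    (hf : ∀ x v : H, |f (x + R v) - f x| ≤ L * ‖v‖) (hε : 0 < ε) (x : H) :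
    f x - ε * L ^ 2 / 2 ≤ lasryLions R f ε x := by
  have hbdd : BddAbove (Set.range fun v : H =>
      (⨅ u : H, f (x + R u - R v) + ‖u‖ ^ 2 / (2 * ε)) - ‖v‖ ^ 2 / ε) :=
    ⟨f x, by rintro _ ⟨v, rfl⟩; exact lasryLions_term_le hf hε x v⟩
  have hinf : f x - ε * L ^ 2 / 2 ≤ ⨅ u : H, f (x + R u - R 0) + ‖u‖ ^ 2 / (2 * ε) :=
    le_ciInf fun u => by
      simpa only [map_zero, sub_zero] using sub_le_add_sq_div_of_lipschitzAlong hf hε x u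
  calc f x - ε * L ^ 2 / 2
      ≤ (⨅ u : H, f (x + R u - R 0) + ‖u‖ ^ 2 / (2 * ε)) - ‖(0 : H)‖ ^ 2 / ε := by
        simpa using hinf
    _ ≤ lasryLions R f ε x := le_ciSup hbdd 0

end LasryLions

theorem stmt2_general
    {H : Type*} [NormedAddCommGroup H] [InnerProductSpace ℝ H]
    (R : H →L[ℝ] H)
    (f : H → ℝ)
    (L : ℝ)
    (hf_lip : ∀ (x v : H), |f (x + R v) - f x| ≤ L * ‖v‖) :
    ∀ ε > (0 : ℝ), ∀ x : H,
      0 ≤ f x - lasryLions R f ε x ∧ f x - lasryLions R f ε x ≤ 4 * ε * L ^ 2 := by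
  intro ε hε x
  have hupper := lasryLions_le hf_lip hε x
  have hlower := sub_le_lasryLions hf_lip hε x
  have hεL : 0 ≤ ε * L ^ 2 := by positivity
  constructor <;> linarith

/-- For bounded `H_R`-Lipschitz `f` with constant `L`, the Lasry–Lions approximation
satisfies `0 ≤ f(x) − f_ε(x) ≤ 4εL²`. -/
theorem stmt2
    {H : Type*} [NormedAddCommGroup H] [InnerProductSpace ℝ H] [CompleteSpace H]
    [SecondCountableTopology H]
    (R : H →L[ℝ] H) (hR_sa : IsSelfAdjoint R)
    (hR_pos : ∀ x : H, 0 ≤ ⟪R x, x⟫)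
    (hR_inj : Function.Injective R)
    (f : H → ℝ) (hf_bdd : ∃ M, ∀ x, |f x| ≤ M)
    (L : ℝ) (hL : 0 ≤ L)
    (hf_lip : ∀ (x v : H), |f (x + R v) - f x| ≤ L * ‖v‖) :
    ∀ ε > (0 : ℝ), ∀ x : H,
      0 ≤ f x - lasryLions R f ε x ∧ f x - lasryLions R f ε x ≤ 4 * ε * L ^ 2 :=
  stmt2_general R f L hf_lip
end

section
/- Let f : H → ℝ be bounded and H_R-Lipschitz with constant L, i.e. |f(x + Rv) − f(x)| ≤ L‖v‖_H for all x ∈ H, v ∈ H. Then for every ε > 0 the Lasry–Lions approximation f_ε is H_R-Lipschitz with constant 4√2 L, i.e. |f_ε(x + Rv) − f_ε(x)| ≤ 4√2 L ‖v‖_H for all x ∈ H and v ∈ H. -/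
/-!
Lipschitz continuity of `f` along the range of `R` transfers to the Lasry–Lions approximation
with the same constant: `f_ε(x + R w)` is the approximation of the translate `f(· + R w)`, which
lies below `f + L‖w‖`, and `f ≤ g + c` implies `f_ε ≤ g_ε + c` (boundedness of `f` keeps every
`⨆`/`⨅` finite). Applying this to `w` and `-w` gives the constant `L`, which is at most `4√2 L`.
-/

open Real
open scoped RealInnerProductSpace

open Set

section LasryLions

variable {H : Type*} [NormedAddCommGroup H] [InnerProductSpace ℝ H] (R : H →L[ℝ] H)
  {f g : H → ℝ} {ε : ℝ}

theorem bddBelow_range_lasryLions_inner (hf : BddBelow (range f)) (hε : 0 ≤ ε) (x v : H) :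
    BddBelow (range fun u : H => f (x + R u - R v) + ‖u‖ ^ 2 / (2 * ε)) := by
  obtain ⟨m, hm⟩ := hf
  refine ⟨m, ?_⟩
  rintro _ ⟨u, rfl⟩
  have hfm : m ≤ f (x + R u - R v) := hm (mem_range_self _)
  have hq : 0 ≤ ‖u‖ ^ 2 / (2 * ε) := by positivity
  linarith

theorem lasryLions_inner_le (hf : BddBelow (range f)) (hε : 0 ≤ ε) (x v : H) :
    ⨅ u : H, (f (x + R u - R v) + ‖u‖ ^ 2 / (2 * ε)) ≤ f (x - R v) := by
  simpa using ciInf_le (bddBelow_range_lasryLions_inner R hf hε x v) 0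

theorem bddAbove_range_lasryLions_outer (hf : BddBelow (range f)) (hf' : BddAbove (range f))
    (hε : 0 ≤ ε) (x : H) :
    BddAbove (range fun v : H =>
      (⨅ u : H, (f (x + R u - R v) + ‖u‖ ^ 2 / (2 * ε))) - ‖v‖ ^ 2 / ε) := by
  obtain ⟨M, hM⟩ := hf'
  refine ⟨M, ?_⟩
  rintro _ ⟨v, rfl⟩
  have hinf := lasryLions_inner_le R hf hε x v
  have hfM : f (x - R v) ≤ M := hM (mem_range_self _)
  have hq : 0 ≤ ‖v‖ ^ 2 / ε := by positivity
  linarith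

theorem lasryLions_le_add_of_le_add {c : ℝ} (hf : BddBelow (range f))
    (hg : BddBelow (range g)) (hg' : BddAbove (range g)) (hε : 0 ≤ ε)
    (hfg : ∀ y, f y ≤ g y + c) (x : H) :
    lasryLions R f ε x ≤ lasryLions R g ε x + c := by
  unfold lasryLions
  refine ciSup_le fun v => ?_
  have hinner : (⨅ u : H, (f (x + R u - R v) + ‖u‖ ^ 2 / (2 * ε))) - c ≤
      ⨅ u : H, (g (x + R u - R v) + ‖u‖ ^ 2 / (2 * ε)) := by
    refine le_ciInf fun u => ?_
    have hle := ciInf_le (bddBelow_range_lasryLions_inner R hf hε x v) u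
    have := hfg (x + R u - R v)
    linarith
  have hsup := le_ciSup (bddAbove_range_lasryLions_outer R hg hg' hε x) v
  linarith

theorem lasryLions_add_apply (x w : H) :
    lasryLions R f ε (x + R w) = lasryLions R (fun y => f (y + R w)) ε x := by
  have hshift : ∀ u v : H, x + R w + R u - R v = x + R u - R v + R w := fun _ _ => by abel
  simp only [lasryLions, hshift]

theorem lasryLions_add_le (hf : Bornology.IsBounded (range f)) {L : ℝ}
    (hf_lip : ∀ y v : H, |f (y + R v) - f y| ≤ L * ‖v‖) (hε : 0 ≤ ε) (x w : H) :
    lasryLions R f ε (x + R w) ≤ lasryLions R f ε x + L * ‖w‖ := by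
  have htrans : Bornology.IsBounded (range fun y => f (y + R w)) :=
    hf.subset (range_comp_subset_range (· + R w) f)
  rw [lasryLions_add_apply]
  exact lasryLions_le_add_of_le_add R htrans.bddBelow hf.bddBelow hf.bddAbove hε
    (fun y => by linarith [(abs_le.mp (hf_lip y w)).2]) x

theorem abs_lasryLions_add_sub_le (hf : Bornology.IsBounded (range f)) {L : ℝ}
    (hf_lip : ∀ y v : H, |f (y + R v) - f y| ≤ L * ‖v‖) (hε : 0 ≤ ε) (x v : H) :
    |lasryLions R f ε (x + R v) - lasryLions R f ε x| ≤ L * ‖v‖ := by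
  have hforward := lasryLions_add_le R hf hf_lip hε x v
  have hback := lasryLions_add_le R hf hf_lip hε (x + R v) (-v)
  rw [map_neg, add_neg_cancel_right, norm_neg] at hback
  rw [abs_sub_le_iff]
  constructor <;> linarith

end LasryLions

theorem stmt4_general
    {H : Type*} [NormedAddCommGroup H] [InnerProductSpace ℝ H]
    (R : H →L[ℝ] H)
    (f : H → ℝ) (hf_bdd : ∃ M, ∀ x, |f x| ≤ M)
    (L : ℝ) (hL : 0 ≤ L)
    (hf_lip : ∀ (x v : H), |f (x + R v) - f x| ≤ L * ‖v‖) :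
    ∀ ε > (0 : ℝ), ∀ (x v : H),
      |lasryLions R f ε (x + R v) - lasryLions R f ε x|
        ≤ 4 * Real.sqrt 2 * L * ‖v‖ := by
  intro ε hε x v
  obtain ⟨M, hM⟩ := hf_bdd
  have hf : Bornology.IsBounded (range f) :=
    isBounded_iff_forall_norm_le.2 ⟨M, by rintro _ ⟨y, rfl⟩; exact hM y⟩
  have hconst : L * ‖v‖ ≤ 4 * Real.sqrt 2 * L * ‖v‖ := by
    have hL' : L ≤ 4 * Real.sqrt 2 * L := by nlinarith [Real.one_lt_sqrt_two]
    gcongr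
  exact (abs_lasryLions_add_sub_le R hf hf_lip hε.le x v).trans hconst

/-- For bounded `H_R`-Lipschitz `f` with constant `L`, the Lasry–Lions approximation
is `H_R`-Lipschitz with constant `4√2 L`. -/
theorem stmt4
    {H : Type*} [NormedAddCommGroup H] [InnerProductSpace ℝ H] [CompleteSpace H]
    [SecondCountableTopology H]
    (R : H →L[ℝ] H) (hR_sa : IsSelfAdjoint R)
    (hR_pos : ∀ x : H, 0 ≤ ⟪R x, x⟫)
    (hR_inj : Function.Injective R)
    (f : H → ℝ) (hf_bdd : ∃ M, ∀ x, |f x| ≤ M)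
    (L : ℝ) (hL : 0 ≤ L)
    (hf_lip : ∀ (x v : H), |f (x + R v) - f x| ≤ L * ‖v‖) :
    ∀ ε > (0 : ℝ), ∀ (x v : H),
      |lasryLions R f ε (x + R v) - lasryLions R f ε x|
        ≤ 4 * Real.sqrt 2 * L * ‖v‖ :=
  stmt4_general R f hf_bdd L hL hf_lip
end

section
/- (Herbst-type lemma.) Let ν be a probability measure on a measurable space, let g be a bounded measurable real-valued function and let K > 0. Assume that for every τ > 0, τ ∫ g e^{τg} dν − (∫ e^{τg} dν) · ln(∫ e^{τg} dν) ≤ K τ² ∫ e^{τg} dν. Then for every t > 0, ∫ e^{t g} dν ≤ exp( K t² + t ∫ g dν ). -/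
/-!
Put `u = log ∫ e^{τg} dν`, the cumulant generating function of `g`. Dividing the hypothesis by
`∫ e^{τg} dν` turns it into the differential inequality `τ u'(τ) - u(τ) ≤ K τ²`, which says that
`u(τ)/τ - K τ` is nonincreasing on `(0, ∞)`. As `τ → 0⁺` this quantity tends to `u'(0) = ∫ g dν`,
so `u(t) ≤ K t² + t ∫ g dν`, and exponentiating gives the claim.
-/

open Real MeasureTheory ProbabilityTheory Filter Set Topology

section Herbst

variable {u u' : ℝ → ℝ} {K : ℝ}

theorem antitoneOn_div_sub_mul_of_mul_deriv_sub_le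
    (hu : ∀ τ > 0, HasDerivAt u (u' τ) τ) (hK : ∀ τ > 0, τ * u' τ - u τ ≤ K * τ ^ 2) :
    AntitoneOn (fun τ ↦ u τ / τ - K * τ) (Ioi 0) := by
  have hψ : ∀ τ > 0, HasDerivAt (fun τ ↦ u τ / τ - K * τ) ((τ * u' τ - u τ) / τ ^ 2 - K) τ := by
    intro τ hτ
    refine (((hu τ hτ).div (hasDerivAt_id' τ) hτ.ne').sub
      ((hasDerivAt_id' τ).const_mul K)).congr_deriv ?_
    ring
  refine antitoneOn_of_hasDerivWithinAt_nonpos (f' := fun τ ↦ (τ * u' τ - u τ) / τ ^ 2 - K)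
    (convex_Ioi 0) (fun τ hτ ↦ (hψ τ hτ).continuousAt.continuousWithinAt) ?_ ?_ <;>
    rw [interior_Ioi]
  · exact fun τ hτ ↦ (hψ τ hτ).hasDerivWithinAt
  · intro τ hτ
    rw [sub_nonpos, div_le_iff₀ (pow_pos hτ 2)]
    exact hK τ hτ

theorem le_mul_sq_add_mul_deriv_zero
    (hu : ∀ τ ≥ 0, HasDerivAt u (u' τ) τ) (hu₀ : u 0 = 0)
    (hK : ∀ τ > 0, τ * u' τ - u τ ≤ K * τ ^ 2) {t : ℝ} (ht : 0 < t) :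
    u t ≤ K * t ^ 2 + t * u' 0 := by
  have hanti := antitoneOn_div_sub_mul_of_mul_deriv_sub_le (fun τ hτ ↦ hu τ hτ.le) hK
  have hlim : Tendsto (fun τ ↦ u τ / τ - K * τ) (𝓝[>] 0) (𝓝 (u' 0)) := by
    have hslope := (hu 0 le_rfl).tendsto_slope_zero_right
    simp only [zero_add, hu₀, sub_zero, smul_eq_mul] at hslope
    have hlin : Tendsto (fun τ : ℝ ↦ K * τ) (𝓝[>] 0) (𝓝 0) :=
      tendsto_nhdsWithin_of_tendsto_nhds <| (continuous_const_mul K).tendsto' 0 0 (mul_zero K)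
    simpa [div_eq_inv_mul] using hslope.sub hlin
  have hψt : u t / t - K * t ≤ u' 0 :=
    ge_of_tendsto hlim <| by
      filter_upwards [Ioo_mem_nhdsGT ht] with τ hτ
      exact hanti hτ.1 ht hτ.2.le
  rw [sub_le_iff_le_add, div_le_iff₀ ht] at hψt
  linarith

end Herbst

theorem hasDerivAt_cgf {Ω : Type*} {m : MeasurableSpace Ω} {X : Ω → ℝ} {μ : Measure Ω} {t : ℝ}
    (h : t ∈ interior (integrableExpSet X μ)) :
    HasDerivAt (cgf X μ) (μ[fun ω ↦ X ω * exp (t * X ω)] / mgf X μ t) t := by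
  rw [← deriv_cgf h]
  exact (analyticAt_cgf h).differentiableAt.hasDerivAt

theorem stmt5_general
    {Ω : Type*} [MeasurableSpace Ω] (ν : Measure Ω) [IsProbabilityMeasure ν]
    (g : Ω → ℝ) (hg_meas : Measurable g) (hg_bdd : ∃ M, ∀ ω, |g ω| ≤ M)
    (K : ℝ)
    (h : ∀ τ > (0 : ℝ),
      τ * ∫ ω, g ω * Real.exp (τ * g ω) ∂ν
        - (∫ ω, Real.exp (τ * g ω) ∂ν) * Real.log (∫ ω, Real.exp (τ * g ω) ∂ν)
        ≤ K * τ ^ 2 * ∫ ω, Real.exp (τ * g ω) ∂ν) :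
    ∀ t > (0 : ℝ),
      ∫ ω, Real.exp (t * g ω) ∂ν ≤ Real.exp (K * t ^ 2 + t * ∫ ω, g ω ∂ν) := by
  intro t ht
  obtain ⟨M, hM⟩ := hg_bdd
  have hint τ : Integrable (fun ω ↦ exp (τ * g ω)) ν :=
    integrable_exp_mul_of_mem_Icc hg_meas.aemeasurable (ae_of_all _ fun ω ↦ abs_le.mp (hM ω))
  have hexp : integrableExpSet g ν = univ := eq_univ_of_forall hint
  have hderiv τ := hasDerivAt_cgf (X := g) (μ := ν) (t := τ) (by simp [hexp])
  have hmgf τ : 0 < mgf g ν τ := mgf_pos (hint τ)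
  have hdiff τ (hτ : 0 < τ) :
      τ * (ν[fun ω ↦ g ω * exp (τ * g ω)] / mgf g ν τ) - cgf g ν τ ≤ K * τ ^ 2 := by
    rw [mul_div_assoc', div_sub' (hmgf τ).ne', div_le_iff₀ (hmgf τ)]
    exact h τ hτ
  have hcgf : cgf g ν t ≤ K * t ^ 2 + t * ∫ ω, g ω ∂ν := by
    simpa using le_mul_sq_add_mul_deriv_zero (fun τ _ ↦ hderiv τ) cgf_zero hdiff ht
  change mgf g ν t ≤ _
  rw [← exp_cgf (hint t)]
  exact exp_le_exp.mpr hcgf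

/-- Herbst-type lemma: if for every `τ > 0`,
`τ ∫ g e^{τg} dν − (∫ e^{τg} dν) ln(∫ e^{τg} dν) ≤ K τ² ∫ e^{τg} dν`,
then `∫ e^{tg} dν ≤ exp(K t² + t ∫ g dν)` for every `t > 0`. -/
theorem stmt5
    {Ω : Type*} [MeasurableSpace Ω] (ν : Measure Ω) [IsProbabilityMeasure ν]
    (g : Ω → ℝ) (hg_meas : Measurable g) (hg_bdd : ∃ M, ∀ ω, |g ω| ≤ M)
    (K : ℝ) (hK : 0 < K)
    (h : ∀ τ > (0 : ℝ),
      τ * ∫ ω, g ω * Real.exp (τ * g ω) ∂ν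
        - (∫ ω, Real.exp (τ * g ω) ∂ν) * Real.log (∫ ω, Real.exp (τ * g ω) ∂ν)
        ≤ K * τ ^ 2 * ∫ ω, Real.exp (τ * g ω) ∂ν) :
    ∀ t > (0 : ℝ),
      ∫ ω, Real.exp (t * g ω) ∂ν ≤ Real.exp (K * t ^ 2 + t * ∫ ω, g ω ∂ν) :=
  stmt5_general ν g hg_meas hg_bdd K h
end

section
/- Let H be a real separable Hilbert space, ν a Borel probability measure on H and C > 0. Assume that for every bounded Fréchet differentiable φ : H → ℝ with inf_H φ > 0 and bounded gradient, ∫ φ ln φ dν − (∫ φ dν) ln(∫ φ dν) ≤ C ∫ ‖∇φ‖_H² / φ dν. Then for every bounded Fréchet differentiable g : H → ℝ with ‖∇g(x)‖_H ≤ 1 for all x ∈ H, and for every τ > 0, τ ∫ g e^{τ g} dν − (∫ e^{τ g} dν) ln(∫ e^{τ g} dν) ≤ C τ² ∫ e^{τ g} dν. -/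
/-!
Apply the logarithmic Sobolev inequality to `φ = e^{τg}`. Since `g` is bounded, `φ` is bounded
above and below by positive constants, and its gradient `τ e^{τg} ∇g` is bounded. Then
`φ ln φ = τ g e^{τg}`, which turns the left-hand side into the claimed one, while `‖∇g‖ ≤ 1`
gives `‖∇φ‖² / φ = τ² e^{τg} ‖∇g‖² ≤ τ² e^{τg}`.
-/

open Real MeasureTheory InnerProductSpace

section Gradient

variable {F : Type*} [NormedAddCommGroup F] [InnerProductSpace ℝ F] [CompleteSpace F]

theorem HasDerivAt.comp_hasGradientAt {h : ℝ → ℝ} {h' : ℝ} {f : F → ℝ} {f' x : F}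
    (hh : HasDerivAt h h' (f x)) (hf : HasGradientAt f f' x) :
    HasGradientAt (h ∘ f) (h' • f') x := by
  rw [hasGradientAt_iff_hasFDerivAt, map_smul]
  exact hh.comp_hasFDerivAt x hf.hasFDerivAt

theorem HasGradientAt.exp_const_mul {f : F → ℝ} {f' x : F} (hf : HasGradientAt f f' x) (τ : ℝ) :
    HasGradientAt (fun y => exp (τ * f y)) ((τ * exp (τ * f x)) • f') x := by
  have hexp : HasDerivAt (fun t => exp (τ * t)) (τ * exp (τ * f x)) (f x) := by
    simpa [mul_comm] using ((hasDerivAt_id (f x)).const_mul τ).exp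
  exact hexp.comp_hasGradientAt hf

theorem continuous_of_hasGradientAt {f : F → ℝ} {f' : F → F}
    (hf : ∀ x, HasGradientAt f (f' x) x) : Continuous f :=
  continuous_iff_continuousAt.2 fun x => (hf x).continuousAt

theorem measurable_gradient [MeasurableSpace F] [BorelSpace F] (f : F → ℝ) :
    Measurable (gradient f) :=
  (toDual ℝ F).symm.continuous.measurable.comp (measurable_fderiv ℝ f)

theorem integral_norm_sq_div_le_of_hasGradientAt [MeasurableSpace F] [BorelSpace F]
    {ν : Measure F} {φ : F → ℝ} {Gφ : F → F} {c : ℝ} (hφ_grad : ∀ x, HasGradientAt φ (Gφ x) x)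
    (hφ_int : Integrable φ ν) (hφ_nonneg : ∀ x, 0 ≤ φ x) (hle : ∀ x, ‖Gφ x‖ ^ 2 / φ x ≤ c * φ x) :
    ∫ x, ‖Gφ x‖ ^ 2 / φ x ∂ν ≤ c * ∫ x, φ x ∂ν := by
  have hφ_meas : Measurable φ := (continuous_of_hasGradientAt hφ_grad).measurable
  have hGφ_meas : Measurable Gφ := gradient_eq hφ_grad ▸ measurable_gradient φ
  have hint : Integrable (fun x => ‖Gφ x‖ ^ 2 / φ x) ν :=
    (hφ_int.const_mul c).mono' ((hGφ_meas.norm.pow_const 2).div hφ_meas).aestronglyMeasurable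
      (.of_forall fun x => by
        rw [norm_of_nonneg (div_nonneg (by positivity) (hφ_nonneg x))]
        exact hle x)
  rw [← integral_const_mul]
  exact integral_mono hint (hφ_int.const_mul c) hle

end Gradient

theorem exp_const_mul_mem_Icc {τ a M : ℝ} (hτ : 0 ≤ τ) (ha : |a| ≤ M) :
    exp (τ * a) ∈ Set.Icc (exp (-(τ * M))) (exp (τ * M)) := by
  obtain ⟨hMa, haM⟩ := abs_le.1 ha
  constructor <;> apply exp_le_exp.2 <;> nlinarith

theorem norm_smul_exp_sq_div_le {E : Type*} [NormedAddCommGroup E] [NormedSpace ℝ E]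
    {τ a : ℝ} {v : E} (hv : ‖v‖ ≤ 1) :
    ‖(τ * exp (τ * a)) • v‖ ^ 2 / exp (τ * a) ≤ τ ^ 2 * exp (τ * a) := by
  have hexp := exp_pos (τ * a)
  have hv2 : ‖v‖ ^ 2 ≤ 1 := pow_le_one₀ (norm_nonneg v) hv
  rw [norm_smul, div_le_iff₀ hexp, mul_pow, norm_mul, norm_of_nonneg hexp.le, mul_pow,
    Real.norm_eq_abs, sq_abs]
  calc τ ^ 2 * exp (τ * a) ^ 2 * ‖v‖ ^ 2 ≤ τ ^ 2 * exp (τ * a) ^ 2 * 1 := by gcongr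
    _ = τ ^ 2 * exp (τ * a) * exp (τ * a) := by ring

theorem norm_smul_exp_le {E : Type*} [NormedAddCommGroup E] [NormedSpace ℝ E]
    {τ a M : ℝ} {v : E} (hτ : 0 ≤ τ) (hv : ‖v‖ ≤ 1) (ha : |a| ≤ M) :
    ‖(τ * exp (τ * a)) • v‖ ≤ τ * exp (τ * M) := by
  rw [norm_smul, norm_mul, norm_of_nonneg hτ, norm_of_nonneg (exp_pos _).le]
  calc τ * exp (τ * a) * ‖v‖ ≤ τ * exp (τ * M) * 1 := by
        gcongr
        exact le_of_abs_le ha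
    _ = τ * exp (τ * M) := mul_one _

theorem stmt8_general
    {H : Type*} [NormedAddCommGroup H] [InnerProductSpace ℝ H] [CompleteSpace H]
    [MeasurableSpace H] [BorelSpace H]
    (ν : Measure H) [IsProbabilityMeasure ν]
    (C : ℝ) (hC : 0 < C)
    (hLSI : ∀ (φ : H → ℝ) (Gφ : H → H),
      (∀ x, HasGradientAt φ (Gφ x) x) →
      (∃ M, ∀ x, |φ x| ≤ M) →
      (∃ c > (0 : ℝ), ∀ x, c ≤ φ x) →
      (∃ M, ∀ x, ‖Gφ x‖ ≤ M) →
      ∫ x, φ x * Real.log (φ x) ∂ν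
          - (∫ x, φ x ∂ν) * Real.log (∫ x, φ x ∂ν)
        ≤ C * ∫ x, ‖Gφ x‖ ^ 2 / φ x ∂ν) :
    ∀ (g : H → ℝ) (Gg : H → H),
      (∀ x, HasGradientAt g (Gg x) x) →
      (∃ M, ∀ x, |g x| ≤ M) →
      (∀ x, ‖Gg x‖ ≤ 1) →
      ∀ τ > (0 : ℝ),
        τ * ∫ x, g x * Real.exp (τ * g x) ∂ν
            - (∫ x, Real.exp (τ * g x) ∂ν) * Real.log (∫ x, Real.exp (τ * g x) ∂ν)
          ≤ C * τ ^ 2 * ∫ x, Real.exp (τ * g x) ∂ν := by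
  intro g Gg hg ⟨M, hM⟩ hGg τ hτ
  set φ : H → ℝ := fun x => exp (τ * g x)
  set Gφ : H → H := fun x => (τ * exp (τ * g x)) • Gg x
  have hφ_grad (x : H) : HasGradientAt φ (Gφ x) x := (hg x).exp_const_mul τ
  have hφ_bounds (x : H) := exp_const_mul_mem_Icc hτ.le (hM x)
  have hφ_abs (x : H) : |φ x| ≤ exp (τ * M) := (abs_of_pos (exp_pos _)).trans_le (hφ_bounds x).2
  have hφ_int : Integrable φ ν :=
    .of_bound (continuous_of_hasGradientAt hφ_grad).aestronglyMeasurable _ (.of_forall hφ_abs)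
  have hLSIφ := hLSI φ Gφ hφ_grad ⟨exp (τ * M), hφ_abs⟩
    ⟨exp (-(τ * M)), exp_pos _, fun x => (hφ_bounds x).1⟩
    ⟨τ * exp (τ * M), fun x => norm_smul_exp_le hτ.le (hGg x) (hM x)⟩
  have hentropy : ∫ x, φ x * log (φ x) ∂ν = τ * ∫ x, g x * φ x ∂ν := by
    rw [← integral_const_mul]
    congr 1 with x
    rw [log_exp]
    ring
  have hfisher : ∫ x, ‖Gφ x‖ ^ 2 / φ x ∂ν ≤ τ ^ 2 * ∫ x, φ x ∂ν :=
    integral_norm_sq_div_le_of_hasGradientAt hφ_grad hφ_int (fun _ => (exp_pos _).le)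
      fun x => norm_smul_exp_sq_div_le (hGg x)
  rw [hentropy] at hLSIφ
  calc _ ≤ C * ∫ x, ‖Gφ x‖ ^ 2 / φ x ∂ν := hLSIφ
    _ ≤ C * (τ ^ 2 * ∫ x, φ x ∂ν) := by gcongr
    _ = C * τ ^ 2 * ∫ x, φ x ∂ν := by ring

/-- If `ν` satisfies the logarithmic Sobolev inequality
`∫ φ ln φ dν − (∫ φ dν) ln(∫ φ dν) ≤ C ∫ ‖∇φ‖²/φ dν` for every bounded Fréchet
differentiable `φ` with positive infimum and bounded gradient, then for every bounded
differentiable `g` with `‖∇g‖ ≤ 1` and every `τ > 0`,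
`τ ∫ g e^{τg} dν − (∫ e^{τg} dν) ln(∫ e^{τg} dν) ≤ C τ² ∫ e^{τg} dν`. -/
theorem stmt8
    {H : Type*} [NormedAddCommGroup H] [InnerProductSpace ℝ H] [CompleteSpace H]
    [SecondCountableTopology H] [MeasurableSpace H] [BorelSpace H]
    (ν : Measure H) [IsProbabilityMeasure ν]
    (C : ℝ) (hC : 0 < C)
    (hLSI : ∀ (φ : H → ℝ) (Gφ : H → H),
      (∀ x, HasGradientAt φ (Gφ x) x) →
      (∃ M, ∀ x, |φ x| ≤ M) →
      (∃ c > (0 : ℝ), ∀ x, c ≤ φ x) →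
      (∃ M, ∀ x, ‖Gφ x‖ ≤ M) →
      ∫ x, φ x * Real.log (φ x) ∂ν
          - (∫ x, φ x ∂ν) * Real.log (∫ x, φ x ∂ν)
        ≤ C * ∫ x, ‖Gφ x‖ ^ 2 / φ x ∂ν) :
    ∀ (g : H → ℝ) (Gg : H → H),
      (∀ x, HasGradientAt g (Gg x) x) →
      (∃ M, ∀ x, |g x| ≤ M) →
      (∀ x, ‖Gg x‖ ≤ 1) →
      ∀ τ > (0 : ℝ),
        τ * ∫ x, g x * Real.exp (τ * g x) ∂ν
            - (∫ x, Real.exp (τ * g x) ∂ν) * Real.log (∫ x, Real.exp (τ * g x) ∂ν)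
          ≤ C * τ ^ 2 * ∫ x, Real.exp (τ * g x) ∂ν :=
  stmt8_general ν C hC hLSI
end

section
/- (Abstract form of Theorem 4.5/4.7 on Gaussian tails of Lipschitz functions.) Let H be a real separable Hilbert space, ν a Borel probability measure on H and C > 0. Assume that for every bounded 1-Lipschitz g : H → ℝ and every τ > 0, τ ∫ g e^{τ g} dν − m(τ) ln m(τ) ≤ C τ² m(τ), where m(τ) := ∫ e^{τ g} dν. Then every (not necessarily bounded) 1-Lipschitz function g : H → ℝ belongs to L¹(H, ν) and satisfies ν({ x ∈ H : g(x) ≥ m_ν(g) + t }) ≤ exp( − t² / (4C) ) for every t > 0. -/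
/-!
Herbst's argument: the entropy inequality says exactly that `s ↦ log 𝔼[e^{s g}] / s - C s` is
nonincreasing on `(0, ∞)`, and its limit at `0⁺` is `𝔼[g]`; applied to `g` and `-g`, every
bounded 1-Lipschitz `g` is sub-Gaussian around its mean with variance proxy `2C`. For a general
1-Lipschitz `g`, the truncations `max (min g n) (-n)` are bounded and 1-Lipschitz. Their means
stay bounded, since concentration keeps them close to the set `{|g| ≤ k}`, whose mass is bounded
below; so along a subsequence they converge to some `m`, and Fatou's lemma passes the sub-Gaussian
bound to `g - m`. Hence `g` is integrable, `m = 𝔼[g]`, and the Chernoff bound gives the tail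
estimate.
-/

open Real MeasureTheory Filter Topology ProbabilityTheory
open scoped NNReal

lemma le_mul_add_mul_sq_of_mul_deriv_sub_le {φ φ' : ℝ → ℝ} {C τ : ℝ} (h0 : φ 0 = 0)
    (hφ : ∀ s, 0 ≤ s → HasDerivAt φ (φ' s) s)
    (hineq : ∀ s, 0 < s → s * φ' s - φ s ≤ C * s ^ 2) (hτ : 0 < τ) :
    φ τ ≤ φ' 0 * τ + C * τ ^ 2 := by
  set f : ℝ → ℝ := fun s => φ s / s - C * s
  have hf : ∀ s, 0 < s → HasDerivAt f ((φ' s * s - φ s * 1) / s ^ 2 - C * 1) s := fun s hs =>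
    ((hφ s hs.le).div (hasDerivAt_id s) hs.ne').sub ((hasDerivAt_id s).const_mul C)
  have hanti : AntitoneOn f (Set.Ioi 0) := by
    refine antitoneOn_of_hasDerivWithinAt_nonpos
      (f' := fun s => (φ' s * s - φ s * 1) / s ^ 2 - C * 1) (convex_Ioi 0)
      (fun s hs => (hf s hs).continuousAt.continuousWithinAt) ?_ ?_ <;> rw [interior_Ioi]
    · exact fun s hs => (hf s hs).hasDerivWithinAt
    · intro s hs
      have hs2 : 0 < s ^ 2 := pow_pos hs 2
      rw [sub_nonpos, mul_one, mul_one, div_le_iff₀ hs2]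
      linarith [hineq s hs]
  have hslope : Tendsto f (𝓝[>] 0) (𝓝 (φ' 0 - C * 0)) := by
    refine Tendsto.sub ?_ ((continuous_const_mul C).tendsto 0 |>.mono_left nhdsWithin_le_nhds)
    have := (hasDerivAt_iff_tendsto_slope.1 (hφ 0 le_rfl)).mono_left
      (nhdsWithin_mono 0 fun s (hs : 0 < s) => hs.ne')
    refine this.congr fun s => ?_
    simp [slope_def_field, h0]
  have hfτ : f τ ≤ φ' 0 := by
    refine ge_of_tendsto (by simpa using hslope) ?_
    filter_upwards [Ioc_mem_nhdsGT hτ] with s hs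
    exact hanti hs.1 hτ hs.2
  have : φ τ / τ ≤ φ' 0 + C * τ := by simp only [f] at hfτ; linarith
  rw [div_le_iff₀ hτ] at this
  linarith

namespace ProbabilityTheory

variable {Ω : Type*} [MeasurableSpace Ω] {μ : Measure Ω} {X : Ω → ℝ}

/-- The left-hand side is the entropy `Ent_μ(e^{τX})`. -/
def HasExpEntropyBound (X : Ω → ℝ) (C : ℝ) (μ : Measure Ω) : Prop :=
  ∀ τ > 0, τ * μ[fun ω => X ω * exp (τ * X ω)] - mgf X μ τ * log (mgf X μ τ)
    ≤ C * τ ^ 2 * mgf X μ τ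

lemma hasDerivAt_cgf [IsProbabilityMeasure μ]
    (hX : ∀ t, Integrable (fun ω => exp (t * X ω)) μ) (t : ℝ) :
    HasDerivAt (cgf X μ) (μ[fun ω => X ω * exp (t * X ω)] / mgf X μ t) t := by
  have ht : t ∈ interior (integrableExpSet X μ) := by
    simp [Set.eq_univ_of_forall (s := integrableExpSet X μ) hX]
  exact (hasDerivAt_mgf ht).log (mgf_pos (hX t)).ne'

lemma cgf_le_of_hasExpEntropyBound [IsProbabilityMeasure μ] {C τ : ℝ}
    (hX : ∀ t, Integrable (fun ω => exp (t * X ω)) μ) (hent : HasExpEntropyBound X C μ)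
    (hτ : 0 < τ) : cgf X μ τ ≤ μ[X] * τ + C * τ ^ 2 := by
  have := le_mul_add_mul_sq_of_mul_deriv_sub_le (C := C) cgf_zero (fun s _ => hasDerivAt_cgf hX s)
    (fun s hs => ?_) hτ
  · simpa [mgf_zero] using this
  · have hM := mgf_pos (hX s)
    rw [cgf, mul_div_assoc', sub_le_iff_le_add, div_le_iff₀ hM]
    nlinarith [hent s hs]

lemma mgf_sub_integral_le_of_hasExpEntropyBound [IsProbabilityMeasure μ] {C τ : ℝ}
    (hX : ∀ t, Integrable (fun ω => exp (t * X ω)) μ) (hent : HasExpEntropyBound X C μ)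
    (hτ : 0 ≤ τ) : mgf (fun ω => X ω - μ[X]) μ τ ≤ exp (C * τ ^ 2) := by
  rcases hτ.eq_or_lt with rfl | hτ
  · simp
  calc mgf (fun ω => X ω - μ[X]) μ τ = exp (-(μ[X] * τ)) * exp (cgf X μ τ) := by
        rw [exp_cgf (hX τ), mgf, mgf, ← integral_const_mul]
        congr 1 with ω
        rw [← exp_add]
        ring_nf
    _ ≤ exp (-(μ[X] * τ)) * exp (μ[X] * τ + C * τ ^ 2) := by
        gcongr
        exact cgf_le_of_hasExpEntropyBound hX hent hτ
    _ = exp (C * τ ^ 2) := by rw [← exp_add]; ring_nf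

lemma hasSubgaussianMGF_sub_integral_of_hasExpEntropyBound [IsProbabilityMeasure μ] {C : ℝ≥0}
    (hX : ∀ t, Integrable (fun ω => exp (t * X ω)) μ) (hent : HasExpEntropyBound X C μ)
    (hent_neg : HasExpEntropyBound (-X) C μ) :
    HasSubgaussianMGF (fun ω => X ω - μ[X]) (2 * C) μ where
  integrable_exp_mul t := by
    refine ((hX t).const_mul (exp (-(t * μ[X])))).congr (ae_of_all _ fun ω => ?_)
    simp only [← exp_add]
    ring_nf
  mgf_le t := by
    have hX_neg : ∀ t, Integrable (fun ω => exp (t * (-X) ω)) μ := fun t => by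
      simpa using hX (-t)
    have h2C : exp (C * t ^ 2) = exp ((2 * C : ℝ≥0) * t ^ 2 / 2) := by push_cast; ring_nf
    rcases le_total 0 t with ht | ht
    · exact h2C ▸ mgf_sub_integral_le_of_hasExpEntropyBound hX hent ht
    · have := mgf_sub_integral_le_of_hasExpEntropyBound hX_neg hent_neg (neg_nonneg.2 ht)
      rw [neg_sq, h2C] at this
      convert this using 1
      simp only [mgf, Pi.neg_apply, integral_neg]
      congr 1 with ω
      ring_nf

lemma HasSubgaussianMGF.of_tendsto {X : ℕ → Ω → ℝ} {Y : Ω → ℝ} {c : ℝ≥0}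
    (hX : ∀ n, HasSubgaussianMGF (X n) c μ)
    (hlim : ∀ᵐ ω ∂μ, Tendsto (fun n => X n ω) atTop (𝓝 (Y ω))) :
    HasSubgaussianMGF Y c μ := by
  have hY : AEMeasurable Y μ :=
    aemeasurable_of_tendsto_metrizable_ae' (fun n => (hX n).aemeasurable) hlim
  have hfatou : ∀ t, ∫⁻ ω, ENNReal.ofReal (exp (t * Y ω)) ∂μ
      ≤ ENNReal.ofReal (exp (c * t ^ 2 / 2)) := by
    intro t
    calc ∫⁻ ω, ENNReal.ofReal (exp (t * Y ω)) ∂μ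
        = ∫⁻ ω, liminf (fun n => ENNReal.ofReal (exp (t * X n ω))) atTop ∂μ := by
          refine lintegral_congr_ae ?_
          filter_upwards [hlim] with ω hω
          exact (((ENNReal.continuous_ofReal.comp (continuous_exp.comp
            (continuous_const_mul t))).tendsto _).comp hω).liminf_eq.symm
      _ ≤ liminf (fun n => ∫⁻ ω, ENNReal.ofReal (exp (t * X n ω)) ∂μ) atTop :=
          lintegral_liminf_le' fun n => ((hX n).integrable_exp_mul t).aemeasurable.ennreal_ofReal
      _ ≤ ENNReal.ofReal (exp (c * t ^ 2 / 2)) := by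
          refine liminf_le_of_frequently_le' (Frequently.of_forall fun n => ?_)
          rw [← ofReal_integral_eq_lintegral_ofReal ((hX n).integrable_exp_mul t)
            (ae_of_all _ fun _ => (exp_pos _).le)]
          exact ENNReal.ofReal_le_ofReal ((hX n).mgf_le t)
  have hint : ∀ t, Integrable (fun ω => exp (t * Y ω)) μ := fun t =>
    ⟨aemeasurable_exp_mul t hY,
      (hasFiniteIntegral_iff_ofReal (ae_of_all _ fun _ => (exp_pos _).le)).2
        ((hfatou t).trans_lt ENNReal.ofReal_lt_top)⟩
  refine ⟨hint, fun t => ?_⟩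
  rw [← ENNReal.ofReal_le_ofReal_iff (exp_nonneg _), mgf,
    ofReal_integral_eq_lintegral_ofReal (hint t) (ae_of_all _ fun _ => (exp_pos _).le)]
  exact hfatou t

lemma HasSubgaussianMGF.integral_eq_zero [IsProbabilityMeasure μ] {c : ℝ≥0}
    (h : HasSubgaussianMGF X c μ) : μ[X] = 0 := by
  have hcgf : HasDerivAt (cgf X μ) μ[X] 0 := by
    simpa using hasDerivAt_cgf h.integrable_exp_mul 0
  have hmin : IsLocalMin (fun t => c * t ^ 2 / 2 - cgf X μ t) 0 :=
    Eventually.of_forall fun t => by simp [cgf_zero, h.cgf_le t]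
  simpa using hmin.hasDerivAt_eq_zero
    ((((hasDerivAt_pow 2 0).const_mul (c : ℝ)).div_const 2).sub hcgf)

lemma HasSubgaussianMGF.measure_add_le_of_sub {Y : Ω → ℝ} {m t : ℝ} {c : ℝ≥0}
    [IsFiniteMeasure μ] (h : HasSubgaussianMGF (fun ω => Y ω - m) c μ) (ht : 0 ≤ t) :
    μ {ω | m + t ≤ Y ω} ≤ ENNReal.ofReal (exp (-t ^ 2 / (2 * c))) := by
  rw [ENNReal.le_ofReal_iff_toReal_le (measure_ne_top _ _) (exp_nonneg _), ← measureReal_def]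
  simpa only [le_sub_iff_add_le'] using h.measure_ge_le ht

lemma HasSubgaussianMGF.abs_le_of_lt_measureReal [IsFiniteMeasure μ] {Y : Ω → ℝ}
    {m k t : ℝ} {c : ℝ≥0} {S : Set Ω} (h : HasSubgaussianMGF (fun ω => Y ω - m) c μ)
    (ht : 0 ≤ t) (hS : ∀ ω ∈ S, |Y ω| ≤ k) (hSμ : exp (-t ^ 2 / (2 * c)) < μ.real S) :
    |m| ≤ k + t := by
  by_contra! hm
  have hsub : S ⊆ {ω | t ≤ Y ω - m} ∨ S ⊆ {ω | t ≤ (-fun ω => Y ω - m) ω} := by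
    rcases lt_abs.1 hm with hm | hm
    · refine Or.inr fun ω hω => ?_
      have := abs_le.1 (hS ω hω)
      show t ≤ -(Y ω - m)
      linarith
    · refine Or.inl fun ω hω => ?_
      have := abs_le.1 (hS ω hω)
      show t ≤ Y ω - m
      linarith
  rcases hsub with hsub | hsub
  · exact ((measureReal_mono hsub).trans (h.measure_ge_le ht)).not_gt hSμ
  · exact ((measureReal_mono hsub).trans (h.neg.measure_ge_le ht)).not_gt hSμ

lemma exists_forall_abs_le_of_hasSubgaussianMGF_sub [IsProbabilityMeasure μ]
    {Y : ℕ → Ω → ℝ} {m : ℕ → ℝ} {g : Ω → ℝ} {c : ℝ≥0} (hc : 0 < c)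
    (hY : ∀ n, HasSubgaussianMGF (fun ω => Y n ω - m n) c μ)
    (hYg : ∀ n ω, |Y n ω| ≤ |g ω|) :
    ∃ B, ∀ n, |m n| ≤ B := by
  have hexp : exp (-1 ^ 2 / (2 * c)) < 1 :=
    exp_lt_one_iff.2 (div_neg_of_neg_of_pos (by norm_num) (by positivity))
  obtain ⟨k, hk⟩ : ∃ k : ℕ, exp (-1 ^ 2 / (2 * c)) < μ.real {ω | |g ω| ≤ k} := by
    have hmono : Monotone fun k : ℕ => {ω | |g ω| ≤ k} :=
      fun a b hab ω (hω : |g ω| ≤ a) => hω.trans (Nat.cast_le.2 hab)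
    have hunion : ⋃ k : ℕ, {ω | |g ω| ≤ k} = Set.univ :=
      Set.eq_univ_of_forall fun ω => Set.mem_iUnion.2 ⟨⌈|g ω|⌉₊, Nat.le_ceil |g ω|⟩
    have hlim := tendsto_measure_iUnion_atTop (μ := μ) hmono
    rw [hunion, measure_univ] at hlim
    have hlim_real := (ENNReal.tendsto_toReal ENNReal.one_ne_top).comp hlim
    exact (hlim_real.eventually (eventually_gt_nhds (by simpa using hexp))).exists
  exact ⟨k + 1, fun n =>
    (hY n).abs_le_of_lt_measureReal zero_le_one (fun ω hω => (hYg n ω).trans hω) hk⟩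

end ProbabilityTheory

section Clamp

variable {α : Type*} {g : α → ℝ}

def clamp (g : α → ℝ) (n : ℕ) (x : α) : ℝ := max (min (g x) n) (-n)

lemma clamp_mem_Icc (n : ℕ) (x : α) : clamp g n x ∈ Set.Icc (-(n : ℝ)) n :=
  ⟨le_max_right _ _, max_le (min_le_right _ _) (by simp)⟩

lemma abs_clamp_le (n : ℕ) (x : α) : |clamp g n x| ≤ |g x| := by
  unfold clamp
  rw [abs_le]
  constructor
  · exact le_max_of_le_left
      (le_min (neg_abs_le _) ((neg_nonpos.2 (abs_nonneg _)).trans n.cast_nonneg))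
  · exact max_le ((min_le_left _ _).trans (le_abs_self _))
      ((neg_nonpos.2 n.cast_nonneg).trans (abs_nonneg _))

lemma tendsto_clamp (x : α) : Tendsto (fun n => clamp g n x) atTop (𝓝 (g x)) := by
  refine tendsto_const_nhds.congr' ?_
  filter_upwards [eventually_ge_atTop ⌈|g x|⌉₊] with n hn
  have hx := abs_le.1 ((Nat.le_ceil _).trans (Nat.cast_le.2 hn))
  rw [clamp, min_eq_left hx.2, max_eq_left hx.1]

lemma LipschitzWith.clamp [PseudoEMetricSpace α] {K : ℝ≥0} (hg : LipschitzWith K g) (n : ℕ) :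
    LipschitzWith K (clamp g n) :=
  (hg.min_const _).max_const _

end Clamp

theorem stmt9_general
    {H : Type*} [NormedAddCommGroup H]
    [MeasurableSpace H] [BorelSpace H]
    (ν : Measure H) [IsProbabilityMeasure ν]
    (C : ℝ) (hC : 0 < C)
    (h : ∀ g : H → ℝ, (∃ M, ∀ x, |g x| ≤ M) → LipschitzWith 1 g →
      ∀ τ > (0 : ℝ),
        τ * ∫ x, g x * Real.exp (τ * g x) ∂ν
            - (∫ x, Real.exp (τ * g x) ∂ν) * Real.log (∫ x, Real.exp (τ * g x) ∂ν)
          ≤ C * τ ^ 2 * ∫ x, Real.exp (τ * g x) ∂ν) :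
    ∀ g : H → ℝ, LipschitzWith 1 g →
      Integrable g ν ∧
      ∀ t > (0 : ℝ),
        ν {x | (∫ y, g y ∂ν) + t ≤ g x}
          ≤ ENNReal.ofReal (Real.exp (-(t ^ 2) / (4 * C))) := by
  intro g hg
  set c : ℝ≥0 := ⟨C, hC.le⟩
  have hsubgaussian : ∀ f : H → ℝ, (∃ M, ∀ x, |f x| ≤ M) → LipschitzWith 1 f →
      HasSubgaussianMGF (fun x => f x - ∫ y, f y ∂ν) (2 * c) ν := by
    rintro f ⟨M, hM⟩ hf
    refine hasSubgaussianMGF_sub_integral_of_hasExpEntropyBound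
      (fun t => integrable_exp_mul_of_mem_Icc hf.continuous.aemeasurable
        (ae_of_all _ fun x => abs_le.1 (hM x)))
      (h f ⟨M, hM⟩ hf) (h (-f) ⟨M, fun x => ?_⟩ hf.neg)
    simpa using hM x
  have hclamp (n : ℕ) := hsubgaussian (clamp g n)
    ⟨n, fun x => abs_le.2 (clamp_mem_Icc n x)⟩ (hg.clamp n)
  have hc : 0 < 2 * c := mul_pos two_pos (NNReal.coe_pos.1 (show 0 < (c : ℝ) from hC))
  obtain ⟨B, hB⟩ := exists_forall_abs_le_of_hasSubgaussianMGF_sub hc hclamp abs_clamp_le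
  obtain ⟨m, -, φ, hφ, hm⟩ := tendsto_subseq_of_bounded (Metric.isBounded_Icc (-B) B)
    fun n => abs_le.1 (hB n)
  have hgm : HasSubgaussianMGF (fun x => g x - m) (2 * c) ν :=
    .of_tendsto (fun n => hclamp (φ n))
      (ae_of_all _ fun x => ((tendsto_clamp x).comp hφ.tendsto_atTop).sub hm)
  have hint : Integrable g ν := by
    simpa [sub_eq_add_neg, integrable_add_const_iff] using hgm.integrable
  have hmean : ∫ y, g y ∂ν = m := by
    simpa [integral_sub hint (integrable_const m), sub_eq_zero] using hgm.integral_eq_zero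
  refine ⟨hint, fun t ht => ?_⟩
  convert (hmean ▸ hgm).measure_add_le_of_sub ht.le using 4
  have hcC : (c : ℝ) = C := rfl
  push_cast [hcC]
  ring

/-- Gaussian tails of Lipschitz functions: if for every bounded 1-Lipschitz `g` and
every `τ > 0`, `τ ∫ g e^{τg} dν − m(τ) ln m(τ) ≤ C τ² m(τ)` where `m(τ) = ∫ e^{τg} dν`,
then every 1-Lipschitz `g` is `ν`-integrable and
`ν({g ≥ m_ν(g) + t}) ≤ exp(−t²/(4C))` for every `t > 0`. -/
theorem stmt9
    {H : Type*} [NormedAddCommGroup H] [InnerProductSpace ℝ H] [CompleteSpace H]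
    [SecondCountableTopology H] [MeasurableSpace H] [BorelSpace H]
    (ν : Measure H) [IsProbabilityMeasure ν]
    (C : ℝ) (hC : 0 < C)
    (h : ∀ g : H → ℝ, (∃ M, ∀ x, |g x| ≤ M) → LipschitzWith 1 g →
      ∀ τ > (0 : ℝ),
        τ * ∫ x, g x * Real.exp (τ * g x) ∂ν
            - (∫ x, Real.exp (τ * g x) ∂ν) * Real.log (∫ x, Real.exp (τ * g x) ∂ν)
          ≤ C * τ ^ 2 * ∫ x, Real.exp (τ * g x) ∂ν) :
    ∀ g : H → ℝ, LipschitzWith 1 g →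
      Integrable g ν ∧
      ∀ t > (0 : ℝ),
        ν {x | (∫ y, g y ∂ν) + t ≤ g x}
          ≤ ENNReal.ofReal (Real.exp (-(t ^ 2) / (4 * C))) :=
  stmt9_general ν C hC h
end

section
/- (Logarithmic Sobolev inequality implies the Poincaré inequality.) Let H be a real separable Hilbert space, ν a Borel probability measure on H and C > 0. Assume that for every bounded Fréchet differentiable f : H → ℝ with bounded gradient, ∫ f² ln f² dν − (∫ f² dν) ln(∫ f² dν) ≤ 4C ∫ ‖∇f‖_H² dν (with the convention 0·ln 0 = 0). Then for every such f, ∫ f² dν − (∫ f dν)² ≤ 2C ∫ ‖∇f‖_H² dν. -/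
/-!
Apply the log-Sobolev inequality to `1 + ε f`. Near `1`,
`x log x = (x - 1) + (x - 1)² / 2 + O(|x - 1|³)`, so the entropy of `(1 + ε f)²` is half its
variance up to `O(ε³)`, and that variance is `4 ε² Var f + O(ε³)`, while the gradient side is
`4 C ε² ∫ ‖∇f‖²`. Dividing by `2 ε²` and letting `ε → 0` gives the Poincaré inequality.
-/

open Real MeasureTheory ProbabilityTheory Filter Topology

theorem abs_mul_log_sub_taylor_le {x : ℝ} (hx : |x - 1| ≤ 1 / 2) :
    |x * log x - ((x - 1) + (x - 1) ^ 2 / 2)| ≤ 4 * |x - 1| ^ 3 := by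
  set u := x - 1
  have hu : 0 ≤ |u| := abs_nonneg u
  have hlog := abs_log_sub_add_sum_range_le (x := -u) (by rw [abs_neg]; linarith) 2
  set r := log x - (u - u ^ 2 / 2)
  have hr : |r| ≤ 2 * |u| ^ 3 := by
    have hden : |u| ^ 3 / (1 - |u|) ≤ 2 * |u| ^ 3 := by
      rw [div_le_iff₀ (by linarith)]; nlinarith [pow_nonneg hu 3]
    have hr_eq : r = -u + u ^ 2 / 2 + log (1 + u) := by simp only [r, u]; ring_nf
    rw [hr_eq]
    norm_num [Finset.sum_range_succ] at hlog
    linarith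
  have hx' : |x| ≤ 3 / 2 := by
    have : x = 1 + u := by ring
    rw [this]; linarith [abs_add_le (1 : ℝ) u, abs_one (α := ℝ)]
  calc |x * log x - (u + u ^ 2 / 2)| = |x * r - u ^ 3 / 2| := by
        congr 1; simp only [r, u]; ring
    _ ≤ |x| * |r| + |u| ^ 3 / 2 := by
        rw [← abs_mul]; refine (abs_sub _ _).trans (le_of_eq ?_)
        rw [abs_div, abs_pow]; norm_num
    _ ≤ 3 / 2 * (2 * |u| ^ 3) + |u| ^ 3 / 2 := by gcongr
    _ ≤ 4 * |u| ^ 3 := by nlinarith [pow_nonneg hu 3]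

theorem mul_log_sub_mul_log_ge {x y δ : ℝ} (hδ : δ ≤ 1 / 2) (hx : |x - 1| ≤ δ)
    (hy : |y - 1| ≤ δ) :
    y * (x - y) + (x - y) ^ 2 / 2 - 8 * δ ^ 3 ≤ x * log x - y * log y := by
  have hx3 : |x - 1| ^ 3 ≤ δ ^ 3 := pow_le_pow_left₀ (abs_nonneg _) hx 3
  have hy3 : |y - 1| ^ 3 ≤ δ ^ 3 := pow_le_pow_left₀ (abs_nonneg _) hy 3
  have tx := (abs_le.1 (abs_mul_log_sub_taylor_le (hx.trans hδ))).1
  have ty := (abs_le.1 (abs_mul_log_sub_taylor_le (hy.trans hδ))).2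
  nlinarith

theorem abs_mul_log_le_two {x : ℝ} (hx : |x - 1| ≤ 1 / 2) : |x * log x| ≤ 2 := by
  obtain ⟨hx₁, hx₂⟩ := abs_le.1 hx
  have hx₀ : 0 < x := by linarith
  have hlog : |log x| ≤ 1 := by
    have : x⁻¹ ≤ 2 := by rw [inv_le_comm₀ hx₀ two_pos]; linarith
    rw [abs_le]
    exact ⟨by linarith [one_sub_inv_le_log_of_pos hx₀], by linarith [log_le_sub_one_of_pos hx₀]⟩
  rw [abs_mul, abs_of_pos hx₀]
  nlinarith [abs_nonneg (log x)]

section Entropy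

variable {Ω : Type*} {mΩ : MeasurableSpace Ω}

/-- Since `Real.log 0 = 0`, this follows the convention `0 log 0 = 0`. -/
noncomputable def entropy (μ : Measure Ω) (F : Ω → ℝ) : ℝ :=
  ∫ ω, F ω * log (F ω) ∂μ - (∫ ω, F ω ∂μ) * log (∫ ω, F ω ∂μ)

variable {μ : Measure Ω} [IsProbabilityMeasure μ]

theorem abs_integral_le_of_ae_abs_le {X : Ω → ℝ} {K : ℝ} (h : ∀ᵐ ω ∂μ, |X ω| ≤ K) :
    |μ[X]| ≤ K := by
  have := norm_integral_le_of_norm_le_const (f := X) (by simpa only [Real.norm_eq_abs] using h)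
  rwa [probReal_univ, mul_one, Real.norm_eq_abs] at this

theorem ae_abs_sub_integral_le {X : Ω → ℝ} {K : ℝ} (h : ∀ᵐ ω ∂μ, |X ω| ≤ K) :
    ∀ᵐ ω ∂μ, |X ω - μ[X]| ≤ 2 * K := by
  have hmean := abs_integral_le_of_ae_abs_le h
  filter_upwards [h] with ω hω
  linarith [abs_sub (X ω) μ[X]]

theorem abs_covariance_le {X Y : Ω → ℝ} {α β : ℝ} (hX : ∀ᵐ ω ∂μ, |X ω - μ[X]| ≤ α)
    (hY : ∀ᵐ ω ∂μ, |Y ω - μ[Y]| ≤ β) : |cov[X, Y; μ]| ≤ α * β := by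
  refine abs_integral_le_of_ae_abs_le ?_
  filter_upwards [hX, hY] with ω hXω hYω
  rw [abs_mul]
  exact mul_le_mul hXω hYω (abs_nonneg _) ((abs_nonneg _).trans hXω)

theorem variance_div_two_sub_le_entropy {F : Ω → ℝ} {δ : ℝ} (hF : AEStronglyMeasurable F μ)
    (hδ : δ ≤ 1 / 2) (hFδ : ∀ᵐ ω ∂μ, |F ω - 1| ≤ δ) :
    Var[F; μ] / 2 - 8 * δ ^ 3 ≤ entropy μ F := by
  set m := μ[F]
  have hF_int : Integrable F μ := by
    refine .of_bound hF (1 + δ) ?_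
    filter_upwards [hFδ] with ω hω
    rw [Real.norm_eq_abs]
    linarith [abs_sub_abs_le_abs_sub (F ω) 1, abs_one (α := ℝ)]
  have hm : |m - 1| ≤ δ := by
    have := abs_integral_le_of_ae_abs_le (X := fun ω ↦ F ω - 1) hFδ
    simpa [integral_sub hF_int (integrable_const 1)] using this
  have hF_memLp : MemLp (fun ω ↦ F ω - m) 2 μ := by
    refine .of_bound (hF.sub aestronglyMeasurable_const) (2 * δ) ?_
    filter_upwards [hFδ] with ω hω
    rw [Real.norm_eq_abs]
    linarith [abs_sub_le (F ω) 1 m, abs_sub_comm m 1]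
  have hlin_int : Integrable (fun ω ↦ m * (F ω - m)) μ :=
    (hF_int.sub (integrable_const m)).const_mul m
  have hsq_int : Integrable (fun ω ↦ (F ω - m) ^ 2 / 2) μ := hF_memLp.integrable_sq.div_const 2
  have hquad_int : Integrable (fun ω ↦ m * (F ω - m) + (F ω - m) ^ 2 / 2) μ :=
    hlin_int.add hsq_int
  have hupper_int : Integrable (fun ω ↦ F ω * log (F ω)) μ := by
    refine .of_bound (hF.aemeasurable.mul
      (measurable_log.comp_aemeasurable hF.aemeasurable)).aestronglyMeasurable 2 ?_
    filter_upwards [hFδ] with ω hω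
    rw [Real.norm_eq_abs]
    exact abs_mul_log_le_two (hω.trans hδ)
  calc Var[F; μ] / 2 - 8 * δ ^ 3
      = ∫ ω, m * (F ω - m) + (F ω - m) ^ 2 / 2 - 8 * δ ^ 3 ∂μ := by
        rw [integral_sub hquad_int (integrable_const _), integral_add hlin_int hsq_int,
          integral_const_mul, integral_sub hF_int (integrable_const m), integral_div,
          ← variance_eq_integral hF.aemeasurable]
        simp [m]
    _ ≤ ∫ ω, F ω * log (F ω) - m * log m ∂μ :=
        integral_mono_ae (hquad_int.sub (integrable_const _)) (hupper_int.sub (integrable_const _))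
          (hFδ.mono fun ω hω ↦ mul_log_sub_mul_log_ge hδ hω hm)
    _ = entropy μ F := by
        rw [integral_sub hupper_int (integrable_const _)]
        simp [entropy, m]

theorem variance_sq_one_add_mul_ge {f : Ω → ℝ} {M ε : ℝ} (hf : AEStronglyMeasurable f μ)
    (hfM : ∀ᵐ ω ∂μ, |f ω| ≤ M) (hε : 0 ≤ ε) :
    4 * ε ^ 2 * Var[f; μ] - 16 * ε ^ 3 * M ^ 3 ≤ Var[fun ω ↦ (1 + ε * f ω) ^ 2; μ] := by
  have hf2M : ∀ᵐ ω ∂μ, |f ω ^ 2| ≤ M ^ 2 :=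
    hfM.mono fun ω h ↦ by rw [abs_pow]; exact pow_le_pow_left₀ (abs_nonneg _) h 2
  have hf_L2 : MemLp f 2 μ := .of_bound hf M (by simpa only [Real.norm_eq_abs] using hfM)
  have hf2_L2 : MemLp (fun ω ↦ f ω ^ 2) 2 μ :=
    .of_bound (hf.pow 2) (M ^ 2) (by simpa only [Real.norm_eq_abs] using hf2M)
  have hcov : |cov[f, fun ω ↦ f ω ^ 2; μ]| ≤ 2 * M * (2 * M ^ 2) :=
    abs_covariance_le (ae_abs_sub_integral_le hfM) (ae_abs_sub_integral_le hf2M)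
  have hexpand : Var[fun ω ↦ (1 + ε * f ω) ^ 2; μ] =
      4 * ε ^ 2 * Var[f; μ] + 4 * ε ^ 3 * cov[f, fun ω ↦ f ω ^ 2; μ]
        + ε ^ 4 * Var[fun ω ↦ f ω ^ 2; μ] := by
    have hsplit :
        (fun ω ↦ (1 + ε * f ω) ^ 2) = fun ω ↦ 1 + (2 * ε * f ω + ε ^ 2 * f ω ^ 2) := by
      ext ω; ring
    rw [hsplit, variance_const_add (by fun_prop),
      variance_fun_add (hf_L2.const_mul _) (hf2_L2.const_mul _), variance_const_mul,
      variance_const_mul, covariance_const_mul_left, covariance_const_mul_right]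
    ring
  rw [hexpand]
  nlinarith [(abs_le.1 hcov).1, variance_nonneg (fun ω ↦ f ω ^ 2) μ, pow_nonneg hε 3,
    pow_nonneg hε 4]

end Entropy

theorem le_of_eventually_nhdsGT_le_add_mul {a b K : ℝ}
    (h : ∀ᶠ ε in 𝓝[>] (0 : ℝ), a ≤ b + K * ε) : a ≤ b :=
  ge_of_tendsto (tendsto_nhdsWithin_of_tendsto_nhds
    ((by fun_prop : Continuous fun ε : ℝ ↦ b + K * ε).tendsto' 0 b (by simp))) h

section LogSobolev

variable {H : Type*} [NormedAddCommGroup H] [InnerProductSpace ℝ H] [CompleteSpace H]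

theorem HasGradientAt.const_add_const_mul {f : H → ℝ} {g x : H} (h : HasGradientAt f g x)
    (a c : ℝ) : HasGradientAt (fun y ↦ a + c * f y) (c • g) x := by
  rw [hasGradientAt_iff_hasFDerivAt, map_smul] at *
  exact (h.const_mul c).const_add a

theorem continuous_of_forall_hasGradientAt {f : H → ℝ} {Gf : H → H}
    (h : ∀ x, HasGradientAt f (Gf x) x) : Continuous f :=
  continuous_iff_continuousAt.2 fun x ↦ (h x).differentiableAt.continuousAt

def SatisfiesLogSobolev [MeasurableSpace H] (ν : Measure H) (C : ℝ) : Prop :=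
  ∀ (f : H → ℝ) (Gf : H → H), (∀ x, HasGradientAt f (Gf x) x) → (∃ M, ∀ x, |f x| ≤ M) →
    (∃ M, ∀ x, ‖Gf x‖ ≤ M) → entropy ν (fun x ↦ f x ^ 2) ≤ 4 * C * ∫ x, ‖Gf x‖ ^ 2 ∂ν

theorem SatisfiesLogSobolev.variance_le_add [MeasurableSpace H] [OpensMeasurableSpace H]
    {ν : Measure H} [IsProbabilityMeasure ν] {C : ℝ} (hLSI : SatisfiesLogSobolev ν C)
    {f : H → ℝ} {Gf : H → H} (hgrad : ∀ x, HasGradientAt f (Gf x) x) {M : ℝ} (hfM : ∀ x, |f x| ≤ M)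
    (hG : ∃ K, ∀ x, ‖Gf x‖ ≤ K) {ε : ℝ} (hε : 0 < ε) (hεM : 6 * ε * M ≤ 1) :
    Var[f; ν] ≤ 2 * C * ∫ x, ‖Gf x‖ ^ 2 ∂ν + 112 * M ^ 3 * ε := by
  have hM : 0 ≤ M := (abs_nonneg _).trans (hfM 0)
  have hf := continuous_of_forall_hasGradientAt hgrad
  obtain ⟨K, hK⟩ := hG
  have hεf : ∀ x, |ε * f x| ≤ ε * M := fun x ↦ by
    rw [abs_mul, abs_of_pos hε]; exact mul_le_mul_of_nonneg_left (hfM x) hε.le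
  have hLS := hLSI (fun x ↦ 1 + ε * f x) (fun x ↦ ε • Gf x)
    (fun x ↦ (hgrad x).const_add_const_mul 1 ε)
    ⟨1 + ε * M, fun x ↦ (abs_add_le _ _).trans (by rw [abs_one]; linarith [hεf x])⟩
    ⟨ε * K, fun x ↦ by
      rw [norm_smul, Real.norm_eq_abs, abs_of_pos hε]
      exact mul_le_mul_of_nonneg_left (hK x) hε.le⟩
  have hgrad_sq : ∫ x, ‖ε • Gf x‖ ^ 2 ∂ν = ε ^ 2 * ∫ x, ‖Gf x‖ ^ 2 ∂ν := by
    simp_rw [norm_smul, mul_pow, Real.norm_eq_abs, sq_abs]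
    exact integral_const_mul _ _
  have hnear : ∀ x, |(1 + ε * f x) ^ 2 - 1| ≤ 3 * ε * M := fun x ↦ by
    have hsq : (1 + ε * f x) ^ 2 - 1 = ε * f x * (2 + ε * f x) := by ring
    rw [hsq, abs_mul]
    have : |2 + ε * f x| ≤ 3 := (abs_add_le _ _).trans (by rw [abs_two]; linarith [hεf x])
    nlinarith [hεf x, abs_nonneg (ε * f x)]
  have hent := variance_div_two_sub_le_entropy (μ := ν)
    (by fun_prop : Continuous fun x ↦ (1 + ε * f x) ^ 2).aestronglyMeasurable
    (by linarith) (ae_of_all _ hnear)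
  have hvar := variance_sq_one_add_mul_ge hf.aestronglyMeasurable (ae_of_all ν hfM) hε.le
  rw [hgrad_sq] at hLS
  -- `hvar`, `hent` and `hLS` chain to `2 ε² Var f - 224 ε³ M³ ≤ 4 C ε² ∫ ‖Gf‖²`.
  have hscaled :
      ε ^ 2 * Var[f; ν] ≤ ε ^ 2 * (2 * C * ∫ x, ‖Gf x‖ ^ 2 ∂ν + 112 * M ^ 3 * ε) := by
    nlinarith [pow_pos hε 3, pow_nonneg hM 3]
  exact le_of_mul_le_mul_left hscaled (by positivity)

end LogSobolev

theorem stmt11_general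
    {H : Type*} [NormedAddCommGroup H] [InnerProductSpace ℝ H] [CompleteSpace H]
    [MeasurableSpace H] [BorelSpace H]
    (ν : Measure H) [IsProbabilityMeasure ν]
    (C : ℝ)
    (hLSI : ∀ (f : H → ℝ) (Gf : H → H),
      (∀ x, HasGradientAt f (Gf x) x) →
      (∃ M, ∀ x, |f x| ≤ M) →
      (∃ M, ∀ x, ‖Gf x‖ ≤ M) →
      ∫ x, (f x) ^ 2 * Real.log ((f x) ^ 2) ∂ν
          - (∫ x, (f x) ^ 2 ∂ν) * Real.log (∫ x, (f x) ^ 2 ∂ν)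
        ≤ 4 * C * ∫ x, ‖Gf x‖ ^ 2 ∂ν) :
    ∀ (f : H → ℝ) (Gf : H → H),
      (∀ x, HasGradientAt f (Gf x) x) →
      (∃ M, ∀ x, |f x| ≤ M) →
      (∃ M, ∀ x, ‖Gf x‖ ≤ M) →
      ∫ x, (f x) ^ 2 ∂ν - (∫ x, f x ∂ν) ^ 2 ≤ 2 * C * ∫ x, ‖Gf x‖ ^ 2 ∂ν := by
  intro f Gf hgrad ⟨M, hfM⟩ hG
  have hf := continuous_of_forall_hasGradientAt hgrad
  have hf_L2 : MemLp f 2 ν :=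
    .of_bound hf.aestronglyMeasurable M
      (ae_of_all _ fun x ↦ (Real.norm_eq_abs _).trans_le (hfM x))
  have hsmall : ∀ᶠ ε in 𝓝[>] (0 : ℝ), 6 * ε * M ≤ 1 :=
    nhdsWithin_le_nhds (((by fun_prop : Continuous fun ε : ℝ ↦ 6 * ε * M).tendsto' 0 0
      (by simp)).eventually (eventually_le_nhds one_pos))
  have hvar : Var[f; ν] = ∫ x, f x ^ 2 ∂ν - (∫ x, f x ∂ν) ^ 2 := by
    simp [variance_eq_sub hf_L2]
  rw [← hvar]
  refine le_of_eventually_nhdsGT_le_add_mul (K := 112 * M ^ 3) ?_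
  filter_upwards [self_mem_nhdsWithin, hsmall] with ε hε hεM
  exact SatisfiesLogSobolev.variance_le_add hLSI hgrad hfM hG hε hεM

/-- Logarithmic Sobolev inequality implies the Poincaré inequality: if
`∫ f² ln f² dν − (∫ f² dν) ln(∫ f² dν) ≤ 4C ∫ ‖∇f‖² dν` for every bounded Fréchet
differentiable `f` with bounded gradient, then for every such `f`,
`∫ f² dν − (∫ f dν)² ≤ 2C ∫ ‖∇f‖² dν`. -/
theorem stmt11
    {H : Type*} [NormedAddCommGroup H] [InnerProductSpace ℝ H] [CompleteSpace H]
    [SecondCountableTopology H] [MeasurableSpace H] [BorelSpace H]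
    (ν : Measure H) [IsProbabilityMeasure ν]
    (C : ℝ) (hC : 0 < C)
    (hLSI : ∀ (f : H → ℝ) (Gf : H → H),
      (∀ x, HasGradientAt f (Gf x) x) →
      (∃ M, ∀ x, |f x| ≤ M) →
      (∃ M, ∀ x, ‖Gf x‖ ≤ M) →
      ∫ x, (f x) ^ 2 * Real.log ((f x) ^ 2) ∂ν
          - (∫ x, (f x) ^ 2 ∂ν) * Real.log (∫ x, (f x) ^ 2 ∂ν)
        ≤ 4 * C * ∫ x, ‖Gf x‖ ^ 2 ∂ν) :
    ∀ (f : H → ℝ) (Gf : H → H),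
      (∀ x, HasGradientAt f (Gf x) x) →
      (∃ M, ∀ x, |f x| ≤ M) →
      (∃ M, ∀ x, ‖Gf x‖ ≤ M) →
      ∫ x, (f x) ^ 2 ∂ν - (∫ x, f x ∂ν) ^ 2 ≤ 2 * C * ∫ x, ‖Gf x‖ ^ 2 ∂ν :=
  stmt11_general ν C hLSI
end

section
/- Let ε > 0, β ≥ 0 and let K : [1, ∞) → (0, ∞) be differentiable and satisfy r K'(r) ≤ K(r) ln K(r) + (ε/2) r² K(r) + 2β K(r) for every r ≥ 1. Then for every v ≥ 1, K(v) ≤ exp( (ε/2) v² + v (ln K(1) + 2β) − 2β ). -/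
/-! The substitution `F(r) = (ln K(r) + 2β) / r - (ε/2) r` turns the differential inequality into
`F' ≤ 0`, since `r² F'(r) = r K'(r)/K(r) - ln K(r) - 2β - (ε/2) r²`. Hence `F(v) ≤ F(1)` for
`v ≥ 1`, which after multiplying by `v` and dropping the term `-(ε/2) v ≤ 0` is the claimed bound on
`ln K(v)`. -/

open Real Set

theorem antitoneOn_div_sub_mul_of_mul_deriv_le {f f' : ℝ → ℝ} {a c : ℝ} (ha : 0 < a)
    (hf : ∀ r, a ≤ r → HasDerivWithinAt f (f' r) (Ici a) r)
    (hineq : ∀ r, a ≤ r → r * f' r ≤ f r + c * r ^ 2) :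
    AntitoneOn (fun r => f r / r - c * r) (Ici a) := by
  have hderiv : ∀ r, a ≤ r → HasDerivWithinAt (fun r => f r / r - c * r)
      ((f' r * r - f r * 1) / r ^ 2 - c * 1) (Ici a) r := fun r hr =>
    ((hf r hr).div (hasDerivWithinAt_id r _) (ha.trans_le hr).ne').sub
      ((hasDerivWithinAt_id r _).const_mul c)
  refine antitoneOn_of_hasDerivWithinAt_nonpos (convex_Ici a)
    (f' := fun r => (f' r * r - f r * 1) / r ^ 2 - c * 1)
    (fun r hr => (hderiv r hr).continuousWithinAt) (fun r hr => ?_) (fun r hr => ?_)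
  · rw [interior_Ici] at hr ⊢
    exact (hderiv r hr.le).mono Ioi_subset_Ici_self
  · rw [interior_Ici] at hr
    have hr2 : 0 < r ^ 2 := by have := ha.trans hr; positivity
    rw [mul_one, mul_one, sub_nonpos, div_le_iff₀ hr2]
    linarith [hineq r hr.le]

theorem stmt12_general
    (ε β : ℝ) (hε : 0 < ε)
    (K K' : ℝ → ℝ)
    (hK_pos : ∀ r, 1 ≤ r → 0 < K r)
    (hK_deriv : ∀ r, 1 ≤ r → HasDerivWithinAt K (K' r) (Set.Ici 1) r)
    (hK_ineq : ∀ r, 1 ≤ r →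
      r * K' r ≤ K r * Real.log (K r) + (ε / 2) * r ^ 2 * K r + 2 * β * K r) :
    ∀ v, 1 ≤ v →
      K v ≤ Real.exp ((ε / 2) * v ^ 2 + v * (Real.log (K 1) + 2 * β) - 2 * β) := by
  intro v hv
  have hlog_deriv : ∀ r, 1 ≤ r → HasDerivWithinAt (fun r => Real.log (K r) + 2 * β)
      (K' r / K r) (Ici 1) r := fun r hr =>
    ((hK_deriv r hr).log (hK_pos r hr).ne').add_const _
  have hlog_ineq : ∀ r, 1 ≤ r → r * (K' r / K r) ≤ (Real.log (K r) + 2 * β) + ε / 2 * r ^ 2 :=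
    fun r hr => by
      rw [← mul_div_assoc, div_le_iff₀ (hK_pos r hr)]
      linarith [hK_ineq r hr]
  have hmono := antitoneOn_div_sub_mul_of_mul_deriv_le one_pos hlog_deriv hlog_ineq
    (mem_Ici.mpr le_rfl) (mem_Ici.mpr hv) hv
  have hv0 : 0 < v := one_pos.trans_le hv
  simp only [div_one, mul_one, sub_le_iff_le_add, div_le_iff₀ hv0] at hmono
  rw [← exp_log (hK_pos v hv), exp_le_exp]
  nlinarith [mul_pos hε hv0]

/-- Gronwall-type lemma for the Herbst argument: if `K : [1,∞) → (0,∞)` is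
differentiable and satisfies `r K'(r) ≤ K(r) ln K(r) + (ε/2) r² K(r) + 2β K(r)` for all
`r ≥ 1`, then `K(v) ≤ exp((ε/2) v² + v (ln K(1) + 2β) − 2β)` for every `v ≥ 1`. -/
theorem stmt12
    (ε β : ℝ) (hε : 0 < ε) (hβ : 0 ≤ β)
    (K K' : ℝ → ℝ)
    (hK_pos : ∀ r, 1 ≤ r → 0 < K r)
    (hK_deriv : ∀ r, 1 ≤ r → HasDerivWithinAt K (K' r) (Set.Ici 1) r)
    (hK_ineq : ∀ r, 1 ≤ r →
      r * K' r ≤ K r * Real.log (K r) + (ε / 2) * r ^ 2 * K r + 2 * β * K r) :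
    ∀ v, 1 ≤ v →
      K v ≤ Real.exp ((ε / 2) * v ^ 2 + v * (Real.log (K 1) + 2 * β) - 2 * β) :=
  stmt12_general ε β hε K K' hK_pos hK_deriv hK_ineq
end

section
/- (Abstract form of Proposition 5.6 on ε-logarithmic Sobolev inequalities.) Let H be a real separable Hilbert space, ν a Borel probability measure on H and β : (0, ∞) → [0, ∞). Assume that for every ε > 0, every bounded 1-Lipschitz g : H → ℝ and every τ > 0, τ ∫ g e^{τ g} dν − m(τ) ln m(τ) ≤ ε τ² m(τ) + 2β(ε) m(τ), where m(τ) := ∫ e^{τ g} dν. Then every 1-Lipschitz g : H → ℝ with ∫ e^{|g|} dν < ∞ satisfies ∫ e^{α g²} dν < ∞ for every α > 0. -/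
/-!
Herbst's argument. For bounded `g`, the entropy inequality says exactly that
`τ ↦ log m(τ) / τ - ε τ + 2 β(ε) / τ` is nonincreasing on `(0, ∞)`, so comparing `τ ≥ 1` with `1`
gives `m(τ) ≤ m(1) ^ τ · exp (ε τ² + O(τ))`. Truncating `g` at `±n` and applying Fatou's lemma
extends this to every 1-Lipschitz `g` with `∫ e^{|g|} < ∞`, and applied to `g` and `-g` it bounds
`∫ e^{τ|g|}`. Finally `exp (α s²) ≤ ∑ₖ exp ((1 - k²) / (4α) + k s)` for `s ≥ 0`, and with
`ε = 1 / (8α)` the resulting series of integrals has Gaussian decay in `k`.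
-/

open Real MeasureTheory ProbabilityTheory Filter Set Topology
open scoped ENNReal

lemma mul_sq_le_of_abs_sub_le {α s k : ℝ} (hα : 0 < α) (h : |k - 2 * α * s| ≤ 1) :
    α * s ^ 2 ≤ k * s + (1 - k ^ 2) / (4 * α) := by
  have hsq : (k - 2 * α * s) ^ 2 ≤ 1 := by
    rw [← sq_abs]
    exact pow_le_one₀ (abs_nonneg _) h
  have key : k * s + (1 - k ^ 2) / (4 * α) - α * s ^ 2 = (1 - (k - 2 * α * s) ^ 2) / (4 * α) := by
    field_simp
    ring
  exact sub_nonneg.1 (key ▸ div_nonneg (sub_nonneg.2 hsq) (by positivity))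

lemma summable_exp_mul_sub_mul_sq {a c : ℝ} (hc : 0 < c) :
    Summable fun k : ℕ ↦ exp (a * k - c * k ^ 2) := by
  refine (summable_exp_neg_nat.mul_left (exp ((a + 1) ^ 2 / (4 * c)))).of_nonneg_of_le
    (fun _ ↦ (exp_pos _).le) fun k ↦ ?_
  rw [← exp_add, exp_le_exp]
  have key : (a + 1) ^ 2 / (4 * c) + -(k : ℝ) - (a * k - c * k ^ 2)
      = (2 * c * k - (a + 1)) ^ 2 / (4 * c) := by
    field_simp
    ring
  exact sub_nonneg.1 (key ▸ by positivity)

section Measure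

variable {Ω : Type*} [MeasurableSpace Ω] {μ : Measure Ω}

lemma lintegral_le_of_tendsto {F : ℕ → Ω → ℝ≥0∞} {f : Ω → ℝ≥0∞} (hF : ∀ n, Measurable (F n))
    (hlim : ∀ ω, Tendsto (F · ω) atTop (𝓝 (f ω))) {C : ℝ≥0∞} (hC : ∀ n, ∫⁻ ω, F n ω ∂μ ≤ C) :
    ∫⁻ ω, f ω ∂μ ≤ C :=
  calc ∫⁻ ω, f ω ∂μ = ∫⁻ ω, liminf (F · ω) atTop ∂μ :=
        lintegral_congr fun ω ↦ (hlim ω).liminf_eq.symm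
    _ ≤ liminf (fun n ↦ ∫⁻ ω, F n ω ∂μ) atTop := lintegral_liminf_le hF
    _ ≤ C := liminf_le_of_frequently_le' (.of_forall hC)

lemma lintegral_exp_mul_abs_le {f : Ω → ℝ} (hf : Measurable f) (τ : ℝ) :
    ∫⁻ ω, ENNReal.ofReal (exp (τ * |f ω|)) ∂μ
      ≤ ∫⁻ ω, ENNReal.ofReal (exp (τ * f ω)) ∂μ + ∫⁻ ω, ENNReal.ofReal (exp (τ * -f ω)) ∂μ := by
  rw [← lintegral_add_left (by fun_prop)]
  refine lintegral_mono fun ω ↦ ?_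
  rcases abs_choice (f ω) with h | h <;> rw [h]
  exacts [le_self_add, le_add_self]

lemma integrable_exp_mul_sq_of_lintegral_exp_mul_abs_le {f : Ω → ℝ} (hf : Measurable f)
    {α ε A C : ℝ} (hα : 0 < α) (hε : 4 * α * ε < 1)
    (hmom : ∀ τ ≥ (1 : ℝ), ∫⁻ ω, ENNReal.ofReal (exp (τ * |f ω|)) ∂μ
      ≤ ENNReal.ofReal (C * exp (A * τ + ε * τ ^ 2))) :
    Integrable (fun ω ↦ exp (α * f ω ^ 2)) μ := by
  set c : ℕ → ℝ := fun k ↦ exp ((1 - ((k : ℝ) + 1) ^ 2) / (4 * α))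
  have hpt : ∀ ω, ENNReal.ofReal (exp (α * f ω ^ 2))
      ≤ ∑' k : ℕ, ENNReal.ofReal (c k) * ENNReal.ofReal (exp ((k + 1) * |f ω|)) := by
    intro ω
    set s := |f ω|
    -- `k + 1` lies within `1` of the maximiser `2αs` of `k ↦ k s - k² / (4α)`.
    set k := ⌊2 * α * s⌋₊
    have hk : |((k : ℝ) + 1) - 2 * α * s| ≤ 1 := by
      have := Nat.lt_floor_add_one (2 * α * s)
      have := Nat.floor_le (by positivity : 0 ≤ 2 * α * s)
      rw [abs_le]
      constructor <;> linarith
    refine le_trans ?_ (ENNReal.le_tsum k)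
    rw [← ENNReal.ofReal_mul (exp_pos _).le, ← exp_add, ← sq_abs]
    exact ENNReal.ofReal_le_ofReal (exp_le_exp.2 (by linarith [mul_sq_le_of_abs_sub_le hα hk]))
  set u : ℕ → ℝ := fun k ↦ c k * (C * exp (A * (k + 1) + ε * ((k : ℝ) + 1) ^ 2))
  have hu : Summable u := by
    have hsum := (summable_nat_add_iff 1).2
      (summable_exp_mul_sub_mul_sq (a := A) (c := 1 / (4 * α) - ε) (by
        rw [sub_pos, lt_div_iff₀ (by positivity)]
        linarith))
    refine (hsum.mul_left (C * exp (1 / (4 * α)))).congr fun k ↦ ?_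
    simp only [u, c, Nat.cast_add, Nat.cast_one]
    rw [mul_left_comm, mul_assoc, ← exp_add, ← exp_add]
    congr 2
    ring
  have hlt : ∫⁻ ω, ENNReal.ofReal (exp (α * f ω ^ 2)) ∂μ < ∞ :=
    calc ∫⁻ ω, ENNReal.ofReal (exp (α * f ω ^ 2)) ∂μ
        ≤ ∫⁻ ω, ∑' k : ℕ, ENNReal.ofReal (c k) * ENNReal.ofReal (exp ((k + 1) * |f ω|)) ∂μ :=
          lintegral_mono hpt
      _ = ∑' k : ℕ, ENNReal.ofReal (c k) * ∫⁻ ω, ENNReal.ofReal (exp ((k + 1) * |f ω|)) ∂μ := by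
          rw [lintegral_tsum fun k ↦ by fun_prop]
          simp_rw [lintegral_const_mul' _ _ ENNReal.ofReal_ne_top]
      _ ≤ ∑' k : ℕ, ENNReal.ofReal (u k) := ENNReal.tsum_le_tsum fun k ↦ by
          rw [ENNReal.ofReal_mul (exp_pos _).le]
          exact mul_le_mul_right (hmom _ (by simp)) _
      _ < ∞ := hu.tsum_ofReal_lt_top
  exact ⟨(by fun_prop : Measurable fun ω ↦ exp (α * f ω ^ 2)).aestronglyMeasurable,
    (hasFiniteIntegral_iff_ofReal (ae_of_all _ fun _ ↦ (exp_pos _).le)).2 hlt⟩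

end Measure

namespace ProbabilityTheory

section Herbst

variable {Ω : Type*} [MeasurableSpace Ω] {μ : Measure Ω} [IsProbabilityMeasure μ] {X : Ω → ℝ}

/-- The left-hand side is the entropy `Ent_μ (e^{τX})`. -/
def ExpEntropyBound (X : Ω → ℝ) (μ : Measure Ω) (ε b : ℝ) : Prop :=
  ∀ τ > (0 : ℝ), τ * μ[fun ω ↦ X ω * exp (τ * X ω)] - mgf X μ τ * log (mgf X μ τ)
    ≤ ε * τ ^ 2 * mgf X μ τ + b * mgf X μ τ

lemma hasDerivAt_cgf_of_forall_integrable (hX : ∀ t, Integrable (fun ω ↦ exp (t * X ω)) μ)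
    (t : ℝ) : HasDerivAt (cgf X μ) (μ[fun ω ↦ X ω * exp (t * X ω)] / mgf X μ t) t := by
  have hmem : t ∈ interior (integrableExpSet X μ) := by
    simp [show integrableExpSet X μ = univ from eq_univ_of_forall hX]
  exact (hasDerivAt_mgf hmem).log (mgf_pos (hX t)).ne'

lemma ExpEntropyBound.antitoneOn {ε b : ℝ} (hent : ExpEntropyBound X μ ε b)
    (hX : ∀ t, Integrable (fun ω ↦ exp (t * X ω)) μ) :
    AntitoneOn (fun t ↦ cgf X μ t / t - ε * t + b / t) (Ioi 0) := by
  have hderiv : ∀ t ∈ Ioi (0 : ℝ), HasDerivAt (fun t ↦ cgf X μ t / t - ε * t + b / t)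
      ((t * μ[fun ω ↦ X ω * exp (t * X ω)] - mgf X μ t * log (mgf X μ t)
        - (ε * t ^ 2 * mgf X μ t + b * mgf X μ t)) / (t ^ 2 * mgf X μ t)) t := by
    intro t ht
    have ht : t ≠ 0 := ne_of_gt ht
    have hm := (mgf_pos (hX t)).ne'
    have := (((hasDerivAt_cgf_of_forall_integrable hX t).div (hasDerivAt_id' t) ht).sub
      ((hasDerivAt_id' t).const_mul ε)).add ((hasDerivAt_const t b).div (hasDerivAt_id' t) ht)
    generalize μ[fun ω ↦ X ω * exp (t * X ω)] = m' at this ⊢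
    exact this.congr_deriv (by rw [cgf]; field_simp; ring)
  refine antitoneOn_of_hasDerivWithinAt_nonpos (convex_Ioi 0)
    (fun t ht ↦ (hderiv t ht).continuousAt.continuousWithinAt)
    (fun t ht ↦ (hderiv t (interior_subset ht)).hasDerivWithinAt) fun t ht ↦ ?_
  rw [interior_Ioi] at ht
  exact div_nonpos_of_nonpos_of_nonneg (sub_nonpos.2 (hent t ht))
    (mul_nonneg (sq_nonneg t) (mgf_pos (hX t)).le)

lemma ExpEntropyBound.mgf_le {ε b : ℝ} (hent : ExpEntropyBound X μ ε b)
    (hX : ∀ t, Integrable (fun ω ↦ exp (t * X ω)) μ) {τ : ℝ} (hτ : 1 ≤ τ) :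
    mgf X μ τ ≤ exp (τ * cgf X μ 1 + ε * (τ ^ 2 - τ) + b * (τ - 1)) := by
  have hτ0 : 0 < τ := zero_lt_one.trans_le hτ
  have hanti := hent.antitoneOn hX (mem_Ioi.2 one_pos) (mem_Ioi.2 hτ0) hτ
  simp only [div_one, mul_one] at hanti
  rw [← exp_cgf (hX τ), exp_le_exp]
  have := mul_le_mul_of_nonneg_left hanti hτ0.le
  field_simp at this
  linarith

end Herbst

section Lipschitz

variable {E : Type*} [PseudoMetricSpace E] [MeasurableSpace E] [OpensMeasurableSpace E]
  {ν : Measure E} [IsProbabilityMeasure ν]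

lemma lintegral_exp_mul_le_of_lipschitz {ε b : ℝ}
    (hent : ∀ g : E → ℝ, (∃ M, ∀ x, |g x| ≤ M) → LipschitzWith 1 g → ExpEntropyBound g ν ε b)
    {g : E → ℝ} (hg : LipschitzWith 1 g) (hint : Integrable (fun x ↦ exp |g x|) ν)
    {τ : ℝ} (hτ : 1 ≤ τ) :
    ∫⁻ x, ENNReal.ofReal (exp (τ * g x)) ∂ν
      ≤ ENNReal.ofReal (exp (τ * log (∫ x, exp |g x| ∂ν) + ε * (τ ^ 2 - τ) + b * (τ - 1))) := by
  set G : ℕ → E → ℝ := fun n x ↦ max (min (g x) n) (-n)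
  have hG_lip (n : ℕ) : LipschitzWith 1 (G n) := (hg.min_const _).max_const _
  have hG_mem (n : ℕ) (x : E) : G n x ∈ Icc (-(n : ℝ)) n :=
    ⟨le_max_right _ _, max_le (min_le_right _ _) (by simp)⟩
  have hG_int (n : ℕ) (t : ℝ) : Integrable (fun x ↦ exp (t * G n x)) ν :=
    integrable_exp_mul_of_mem_Icc (hG_lip n).continuous.aemeasurable (ae_of_all _ (hG_mem n))
  have hG_bound (n : ℕ) : ∫⁻ x, ENNReal.ofReal (exp (τ * G n x)) ∂ν
      ≤ ENNReal.ofReal (exp (τ * log (∫ x, exp |g x| ∂ν) + ε * (τ ^ 2 - τ) + b * (τ - 1))) := by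
    have hent_n := hent (G n) ⟨n, fun x ↦ abs_le.2 (hG_mem n x)⟩ (hG_lip n)
    have hcgf : cgf (G n) ν 1 ≤ log (∫ x, exp |g x| ∂ν) := by
      refine log_le_log (mgf_pos (hG_int n 1)) (integral_mono (hG_int n 1) hint fun x ↦ ?_)
      simp only [one_mul, exp_le_exp]
      exact max_le ((min_le_left _ _).trans (le_abs_self _))
        ((neg_nonpos.2 n.cast_nonneg).trans (abs_nonneg _))
    rw [← ofReal_integral_eq_lintegral_ofReal (hG_int n τ) (ae_of_all _ fun _ ↦ (exp_pos _).le)]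
    refine ENNReal.ofReal_le_ofReal ((hent_n.mgf_le (hG_int n) hτ).trans (exp_le_exp.2 ?_))
    gcongr
  refine lintegral_le_of_tendsto (fun n ↦ by have := (hG_lip n).continuous.measurable; fun_prop)
    (fun x ↦ ?_) hG_bound
  refine tendsto_atTop_of_eventually_const (i₀ := ⌈|g x|⌉₊) fun n hn ↦ ?_
  obtain ⟨hlo, hhi⟩ := abs_le.1 ((Nat.le_ceil _).trans (Nat.cast_le.2 hn))
  simp only [G, min_eq_left hhi, max_eq_left hlo]

lemma lintegral_exp_mul_abs_le_of_lipschitz {ε b : ℝ}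
    (hent : ∀ g : E → ℝ, (∃ M, ∀ x, |g x| ≤ M) → LipschitzWith 1 g → ExpEntropyBound g ν ε b)
    {g : E → ℝ} (hg : LipschitzWith 1 g) (hint : Integrable (fun x ↦ exp |g x|) ν)
    {τ : ℝ} (hτ : 1 ≤ τ) :
    ∫⁻ x, ENNReal.ofReal (exp (τ * |g x|)) ∂ν
      ≤ ENNReal.ofReal (2 * exp (-b) * exp ((log (∫ x, exp |g x| ∂ν) - ε + b) * τ + ε * τ ^ 2)) := by
  have hneg := lintegral_exp_mul_le_of_lipschitz hent hg.neg (by simpa using hint) hτ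
  simp only [Pi.neg_apply, abs_neg] at hneg
  calc ∫⁻ x, ENNReal.ofReal (exp (τ * |g x|)) ∂ν
      ≤ ∫⁻ x, ENNReal.ofReal (exp (τ * g x)) ∂ν + ∫⁻ x, ENNReal.ofReal (exp (τ * -g x)) ∂ν :=
        lintegral_exp_mul_abs_le hg.continuous.measurable τ
    _ ≤ _ := add_le_add (lintegral_exp_mul_le_of_lipschitz hent hg hint hτ) hneg
    _ = _ := by
        rw [← ENNReal.ofReal_add (exp_pos _).le (exp_pos _).le, mul_assoc, ← exp_add, two_mul]
        ring_nf

end Lipschitz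

end ProbabilityTheory

theorem stmt13_general
    {H : Type*} [NormedAddCommGroup H] [MeasurableSpace H] [BorelSpace H]
    (ν : Measure H) [IsProbabilityMeasure ν]
    (β : ℝ → ℝ)
    (h : ∀ ε > (0 : ℝ), ∀ g : H → ℝ, (∃ M, ∀ x, |g x| ≤ M) → LipschitzWith 1 g →
      ∀ τ > (0 : ℝ),
        τ * ∫ x, g x * Real.exp (τ * g x) ∂ν
            - (∫ x, Real.exp (τ * g x) ∂ν) * Real.log (∫ x, Real.exp (τ * g x) ∂ν)
          ≤ ε * τ ^ 2 * ∫ x, Real.exp (τ * g x) ∂ν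
            + 2 * β ε * ∫ x, Real.exp (τ * g x) ∂ν) :
    ∀ g : H → ℝ, LipschitzWith 1 g →
      Integrable (fun x => Real.exp |g x|) ν →
      ∀ α > (0 : ℝ), Integrable (fun x => Real.exp (α * (g x) ^ 2)) ν := by
  intro g hg hint α hα
  have hε : (0 : ℝ) < 1 / (8 * α) := by positivity
  exact integrable_exp_mul_sq_of_lintegral_exp_mul_abs_le hg.continuous.measurable hα
    (by field_simp; norm_num) fun τ hτ ↦
      lintegral_exp_mul_abs_le_of_lipschitz (h _ hε) hg hint hτ

/-- ε-logarithmic Sobolev inequalities imply exponential integrability of all orders: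
if for every `ε > 0`, every bounded 1-Lipschitz `g` and every `τ > 0`,
`τ ∫ g e^{τg} dν − m(τ) ln m(τ) ≤ ε τ² m(τ) + 2β(ε) m(τ)` where `m(τ) = ∫ e^{τg} dν`,
then every 1-Lipschitz `g` with `∫ e^{|g|} dν < ∞` satisfies `∫ e^{α g²} dν < ∞`
for every `α > 0`. -/
theorem stmt13
    {H : Type*} [NormedAddCommGroup H] [InnerProductSpace ℝ H] [CompleteSpace H]
    [SecondCountableTopology H] [MeasurableSpace H] [BorelSpace H]
    (ν : Measure H) [IsProbabilityMeasure ν]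
    (β : ℝ → ℝ) (hβ : ∀ ε > (0 : ℝ), 0 ≤ β ε)
    (h : ∀ ε > (0 : ℝ), ∀ g : H → ℝ, (∃ M, ∀ x, |g x| ≤ M) → LipschitzWith 1 g →
      ∀ τ > (0 : ℝ),
        τ * ∫ x, g x * Real.exp (τ * g x) ∂ν
            - (∫ x, Real.exp (τ * g x) ∂ν) * Real.log (∫ x, Real.exp (τ * g x) ∂ν)
          ≤ ε * τ ^ 2 * ∫ x, Real.exp (τ * g x) ∂ν
            + 2 * β ε * ∫ x, Real.exp (τ * g x) ∂ν) :
    ∀ g : H → ℝ, LipschitzWith 1 g →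
      Integrable (fun x => Real.exp |g x|) ν →
      ∀ α > (0 : ℝ), Integrable (fun x => Real.exp (α * (g x) ^ 2)) ν :=
  stmt13_general ν β h
end

section
/- Let a > 0, let f : (0, ∞) → [0, ∞) be differentiable with lim_{s → ∞} f(s) = +∞, and let φ : (0, ∞) → [0, ∞) be a continuous strictly increasing function with lim_{s → ∞} φ(s)/s = +∞. Assume that f'(r) ≥ − a/(2r) + φ(r)/(2r) for every r > 0. Then lim_{s → ∞} f(s)/s = +∞. -/
open Real Filter

/-! If `f' ≥ c` on `[R, ∞)` then `f` grows at least like `c s` there; since the lower bound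
`(φ r - a) / (2 r)` for `f'` tends to infinity, this holds for every slope `c`. -/

theorem mul_sub_le_image_sub_of_le_hasDerivAt_Ici {f f' : ℝ → ℝ} {R c : ℝ}
    (hf : ∀ x ≥ R, HasDerivAt f (f' x) x) (hc : ∀ x ≥ R, c ≤ f' x) {s : ℝ} (hs : R ≤ s) :
    c * (s - R) ≤ f s - f R := by
  refine (convex_Ici R).mul_sub_le_image_sub_of_le_deriv
    (fun x hx => (hf x hx).continuousAt.continuousWithinAt)
    (fun x hx => (hf x (interior_subset hx)).differentiableAt.differentiableWithinAt)
    (fun x hx => ?_) R Set.self_mem_Ici s hs hs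
  rw [(hf x (interior_subset hx)).deriv]
  exact hc x (interior_subset hx)

theorem tendsto_div_atTop_of_tendsto_deriv_atTop {f f' : ℝ → ℝ}
    (hf : ∀ᶠ x in atTop, HasDerivAt f (f' x) x) (hf' : Tendsto f' atTop atTop) :
    Tendsto (fun s => f s / s) atTop atTop := by
  rw [tendsto_atTop]
  intro b
  obtain ⟨R, hR⟩ := eventually_atTop.mp (hf.and (tendsto_atTop.mp hf' (b + 1)))
  set d := f R - (b + 1) * R
  have hgrowth : ∀ s ≥ R, (b + 1) * s + d ≤ f s := fun s hs => by
    have := mul_sub_le_image_sub_of_le_hasDerivAt_Ici (fun x hx => (hR x hx).1)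
      (fun x hx => (hR x hx).2) hs
    linarith
  have hd : Tendsto (fun s : ℝ => d / s) atTop (nhds 0) :=
    tendsto_const_nhds.div_atTop tendsto_id
  filter_upwards [eventually_ge_atTop (max R 1), hd.eventually (lt_mem_nhds neg_one_lt_zero)]
    with s hs hds
  have hs0 : 0 < s := one_pos.trans_le (le_of_max_le_right hs)
  calc b ≤ b + 1 + d / s := by linarith
    _ = ((b + 1) * s + d) / s := by field_simp
    _ ≤ f s / s := by gcongr; exact hgrowth s (le_of_max_le_left hs)

theorem stmt15_general
    (a : ℝ)
    (f f' φ : ℝ → ℝ)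
    (hf_deriv : ∀ r > (0 : ℝ), HasDerivAt f (f' r) r)
    (hφ_superlin : Tendsto (fun s => φ s / s) atTop atTop)
    (hineq : ∀ r > (0 : ℝ), -a / (2 * r) + φ r / (2 * r) ≤ f' r) :
    Tendsto (fun s => f s / s) atTop atTop := by
  have hlower : Tendsto (fun r => -a / (2 * r) + φ r / (2 * r)) atTop atTop := by
    have hφ : Tendsto (fun r => φ r / (2 * r)) atTop atTop := by
      simpa [div_div, mul_comm] using hφ_superlin.atTop_div_const two_pos
    exact (tendsto_const_nhds.div_atTop (tendsto_id.const_mul_atTop two_pos)).add_atTop hφ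
  have hf' : Tendsto f' atTop atTop :=
    tendsto_atTop_mono' _ ((eventually_gt_atTop 0).mono hineq) hlower
  exact tendsto_div_atTop_of_tendsto_deriv_atTop ((eventually_gt_atTop 0).mono hf_deriv) hf'

/-- If `f : (0,∞) → [0,∞)` is differentiable with `f(s) → ∞`, `φ : (0,∞) → [0,∞)` is
continuous, strictly increasing and superlinear, and `f'(r) ≥ −a/(2r) + φ(r)/(2r)` for
all `r > 0`, then `f(s)/s → ∞` as `s → ∞`. -/
theorem stmt15
    (a : ℝ) (ha : 0 < a)
    (f f' φ : ℝ → ℝ)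
    (hf_nonneg : ∀ s > (0 : ℝ), 0 ≤ f s)
    (hf_deriv : ∀ r > (0 : ℝ), HasDerivAt f (f' r) r)
    (hf_lim : Tendsto f atTop atTop)
    (hφ_nonneg : ∀ s > (0 : ℝ), 0 ≤ φ s)
    (hφ_cont : ContinuousOn φ (Set.Ioi 0))
    (hφ_mono : StrictMonoOn φ (Set.Ioi 0))
    (hφ_superlin : Tendsto (fun s => φ s / s) atTop atTop)
    (hineq : ∀ r > (0 : ℝ), -a / (2 * r) + φ r / (2 * r) ≤ f' r) :
    Tendsto (fun s => f s / s) atTop atTop :=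
  stmt15_general a f f' φ hf_deriv hφ_superlin hineq
end

section
/- (Extension of Gaussian tail bounds from bounded to unbounded Lipschitz functions.) Let H be a real separable Hilbert space, ν a Borel probability measure on H and K > 0. Assume that every bounded 1-Lipschitz h : H → ℝ satisfies ν({ x ∈ H : h(x) ≥ m_ν(h) + t }) ≤ exp( − t² / K ) for every t > 0. Then every 1-Lipschitz g : H → ℝ belongs to L^p(H, ν) for every p ≥ 1 and satisfies ν({ x ∈ H : g(x) ≥ m_ν(g) + t }) ≤ exp( − t² / K ) for every t > 0. -/
/-!
Clip a 1-Lipschitz `g` to `g_n = max (-n) (min g n)`. The bounded 1-Lipschitz functions `±g_n`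
satisfy the Gaussian bound, so `g_n` lies below `∫ g_n - t₀` with probability at most `1/2`
(for `t₀² = K log 2`), while `g` exceeds some level `a` with probability below `1/2`; a point
avoiding both events shows `∫ g_n ≤ max a 0 + t₀` uniformly in `n`. Hence `g` has a Gaussian
upper tail above a fixed level, and so does `-g`; thus `|g|` has Gaussian tails and lies in
every `Lᵖ` by the layer-cake formula. Finally `∫ g_n → ∫ g` by dominated convergence, and
the bounds for `g_n` pass to the limit.
-/

open Real MeasureTheory Set Filter Topology
open scoped ENNReal

noncomputable def truncation {α : Type*} (g : α → ℝ) (n : ℕ) (x : α) : ℝ :=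
  max (-(n : ℝ)) (min (g x) n)

def HasGaussianUpperTail {X : Type*} [MeasurableSpace X] (ν : Measure X) (K : ℝ)
    (f : X → ℝ) : Prop :=
  ∀ t > (0 : ℝ), ν {x | (∫ y, f y ∂ν) + t ≤ f x} ≤ ENNReal.ofReal (exp (-(t ^ 2) / K))

section Truncation

variable {α : Type*} (g : α → ℝ) (n : ℕ) (x : α)

lemma abs_truncation_le_natCast : |truncation g n x| ≤ n :=
  abs_le.2 ⟨le_max_left _ _, max_le (neg_le_self n.cast_nonneg) (min_le_right _ _)⟩

lemma abs_truncation_le_abs : |truncation g n x| ≤ |g x| :=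
  abs_le.2 ⟨le_max_of_le_right (le_min (neg_abs_le _) ((neg_nonpos.2 (abs_nonneg _)).trans
    n.cast_nonneg)), max_le ((neg_nonpos.2 n.cast_nonneg).trans (abs_nonneg _))
    ((min_le_left _ _).trans (le_abs_self _))⟩

lemma min_le_truncation : min (g x) n ≤ truncation g n x := le_max_right _ _

lemma truncation_le_of_le {a : ℝ} (ha : 0 ≤ a) (hx : g x ≤ a) : truncation g n x ≤ a :=
  max_le ((neg_nonpos.2 n.cast_nonneg).trans ha) ((min_le_left _ _).trans hx)

lemma truncation_eq_of_abs_le (hx : |g x| ≤ n) : truncation g n x = g x := by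
  rw [abs_le] at hx
  rw [truncation, min_eq_left hx.2, max_eq_right hx.1]

lemma tendsto_truncation : Tendsto (fun n : ℕ => truncation g n x) atTop (𝓝 (g x)) := by
  refine tendsto_const_nhds.congr' ?_
  filter_upwards [eventually_ge_atTop ⌈|g x|⌉₊] with n hn
  exact (truncation_eq_of_abs_le g n x ((Nat.le_ceil _).trans (Nat.cast_le.2 hn))).symm

lemma LipschitzWith.truncation [PseudoEMetricSpace α] {g : α → ℝ} {K : NNReal}
    (hg : LipschitzWith K g) (n : ℕ) : LipschitzWith K (truncation g n) :=
  (hg.min_const _).const_max _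

lemma tendsto_integral_truncation [MeasurableSpace α] {μ : Measure α} {g : α → ℝ}
    (hg : Integrable g μ) :
    Tendsto (fun n : ℕ => ∫ x, truncation g n x ∂μ) atTop (𝓝 (∫ x, g x ∂μ)) :=
  tendsto_integral_of_dominated_convergence (fun x => |g x|)
    (fun n => by unfold truncation; fun_prop) hg.abs
    (fun n => ae_of_all _ fun x => abs_truncation_le_abs g n x)
    (ae_of_all _ (tendsto_truncation g))

end Truncation

section Tails

variable {α : Type*} [MeasurableSpace α] {μ : Measure α}

lemma HasGaussianUpperTail.measure_le_integral_sub {K : ℝ} {f : α → ℝ}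
    (hf : HasGaussianUpperTail μ K (fun x => -f x)) {t : ℝ} (ht : 0 < t) :
    μ {x | f x ≤ (∫ y, f y ∂μ) - t} ≤ ENNReal.ofReal (exp (-(t ^ 2) / K)) := by
  convert hf t ht using 2
  ext x
  simp only [mem_ofPred_eq, integral_neg]
  constructor <;> intro hx <;> linarith

lemma exists_measure_lt_lt [IsFiniteMeasure μ] {f : α → ℝ} (hf : Measurable f)
    {ε : ℝ≥0∞} (hε : 0 < ε) : ∃ a : ℝ, μ {x | a < f x} < ε := by
  have hempty : ⋂ a : ℝ, {x | a < f x} = ∅ :=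
    eq_empty_of_forall_notMem fun x hx => lt_irrefl (f x) (mem_iInter.1 hx (f x))
  have hlim := tendsto_measure_iInter_atTop (μ := μ)
    (fun a => (measurableSet_lt measurable_const hf).nullMeasurableSet)
    (fun a b hab x (hx : b < f x) => hab.trans_lt hx) ⟨0, measure_ne_top μ _⟩
  rw [hempty, measure_empty] at hlim
  exact (hlim.eventually_lt_const hε).exists

lemma memLp_of_measure_le_exp_neg_sq {f : α → ℝ} (hf : Measurable f) (hf0 : 0 ≤ f)
    {A K : ℝ} (hK : 0 < K)
    (htail : ∀ t > (0 : ℝ), μ {x | t ≤ f x} ≤ ENNReal.ofReal (A * exp (-(t ^ 2) / K)))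
    {p : ℝ} (hp : 0 < p) : MemLp f (ENNReal.ofReal p) μ := by
  rw [← integrable_norm_rpow_iff hf.aestronglyMeasurable (by simpa using hp)
    ENNReal.ofReal_ne_top, ENNReal.toReal_ofReal hp.le]
  refine ⟨(hf.norm.pow_const p).aestronglyMeasurable, ?_⟩
  have hφ : IntegrableOn (fun t : ℝ => A * (t ^ (p - 1) * exp (-(1 / K) * t ^ 2))) (Ioi 0) :=
    (integrableOn_rpow_mul_exp_neg_mul_sq (by positivity) (by linarith)).const_mul A
  rw [hasFiniteIntegral_iff_ofReal (ae_of_all _ fun x => by positivity)]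
  simp only [Real.norm_eq_abs, abs_of_nonneg (hf0 _)]
  rw [lintegral_rpow_eq_lintegral_meas_le_mul μ (ae_of_all _ hf0) hf.aemeasurable hp]
  refine ENNReal.mul_lt_top ENNReal.ofReal_lt_top
    ((setLIntegral_mono' measurableSet_Ioi fun t (ht : 0 < t) => ?_).trans_lt hφ.lintegral_lt_top)
  calc μ {x | t ≤ f x} * ENNReal.ofReal (t ^ (p - 1))
      ≤ ENNReal.ofReal (A * exp (-(t ^ 2) / K)) * ENNReal.ofReal (t ^ (p - 1)) :=
        mul_le_mul_left (htail t ht) _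
    _ = ENNReal.ofReal (A * (t ^ (p - 1) * exp (-(1 / K) * t ^ 2))) := by
        rw [← ENNReal.ofReal_mul' (by positivity)]
        congr 1
        ring_nf

lemma memLp_of_measure_add_le_abs [IsFiniteMeasure μ] {f : α → ℝ} (hf : Measurable f)
    {A C K : ℝ} (hK : 0 < K)
    (htail : ∀ t > (0 : ℝ),
      μ {x | C + t ≤ |f x|} ≤ ENNReal.ofReal (A * exp (-(t ^ 2) / K)))
    {p : ℝ} (hp : 0 < p) : MemLp f (ENNReal.ofReal p) μ := by
  have hexcess : MemLp (fun x => max (|f x| - C) 0) (ENNReal.ofReal p) μ := by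
    refine memLp_of_measure_le_exp_neg_sq ((hf.abs.sub_const C).max measurable_const)
      (fun x => le_max_right _ _) hK
      (fun t ht => (measure_mono fun x (hx : t ≤ max (|f x| - C) 0) => ?_).trans (htail t ht)) hp
    show C + t ≤ |f x|
    rcases le_max_iff.1 hx with hx | hx <;> linarith
  refine (hexcess.add (memLp_const C)).mono' hf.aestronglyMeasurable (ae_of_all _ fun x => ?_)
  simp only [Pi.add_apply, Real.norm_eq_abs]
  linarith [le_max_left (|f x| - C) 0]

end Tails

section Concentration

variable {X : Type*} [PseudoMetricSpace X] [MeasurableSpace X] {ν : Measure X} {K : ℝ}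

def HasGaussianConcentration (ν : Measure X) (K : ℝ) : Prop :=
  ∀ f : X → ℝ, (∃ M, ∀ x, |f x| ≤ M) → LipschitzWith 1 f →
    HasGaussianUpperTail ν K f

lemma HasGaussianConcentration.hasGaussianUpperTail_truncation
    (hconc : HasGaussianConcentration ν K) {g : X → ℝ} (hg : LipschitzWith 1 g) (n : ℕ) :
    HasGaussianUpperTail ν K (truncation g n) :=
  hconc _ ⟨n, abs_truncation_le_natCast g n⟩ (hg.truncation n)

lemma HasGaussianConcentration.hasGaussianUpperTail_of_integrable
    (hconc : HasGaussianConcentration ν K) {g : X → ℝ} (hg : LipschitzWith 1 g)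
    (hint : Integrable g ν) : HasGaussianUpperTail ν K g := by
  intro t ht
  set m := ∫ y, g y ∂ν
  set mN := fun n : ℕ => ∫ y, truncation g n y ∂ν
  have hshift : Tendsto (fun n => t + (m - mN n)) atTop (𝓝 t) := by
    simpa [m] using ((tendsto_integral_truncation hint).const_sub m).const_add t
  have hbound : Continuous fun s : ℝ => ENNReal.ofReal (exp (-(s ^ 2) / K)) :=
    ENNReal.continuous_ofReal.comp (by fun_prop)
  refine ge_of_tendsto ((hbound.tendsto t).comp hshift) ?_
  filter_upwards [hshift.eventually (lt_mem_nhds ht), eventually_ge_atTop ⌈m + t⌉₊]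
    with n hpos hn
  refine (measure_mono fun x (hx : m + t ≤ g x) => ?_).trans
    (hconc.hasGaussianUpperTail_truncation hg n _ hpos)
  show mN n + (t + (m - mN n)) ≤ truncation g n x
  linarith [min_le_truncation g n x, le_min hx ((Nat.le_ceil (m + t)).trans (Nat.cast_le.2 hn))]

variable [BorelSpace X] [IsProbabilityMeasure ν]

lemma HasGaussianConcentration.exists_forall_integral_truncation_le
    (hconc : HasGaussianConcentration ν K) (hK : 0 < K) {g : X → ℝ}
    (hg : LipschitzWith 1 g) :
    ∃ C, ∀ n : ℕ, ∫ x, truncation g n x ∂ν ≤ C := by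
  obtain ⟨a, ha⟩ := exists_measure_lt_lt hg.continuous.measurable (μ := ν)
    (ε := 2⁻¹) (by norm_num)
  set t := √(K * log 2)
  have ht : 0 < t := sqrt_pos.2 (mul_pos hK (log_pos one_lt_two))
  have hhalf : ENNReal.ofReal (exp (-(t ^ 2) / K)) = 2⁻¹ := by
    rw [sq_sqrt (mul_pos hK (log_pos one_lt_two)).le, neg_div, mul_div_cancel_left₀ _ hK.ne',
      exp_neg, exp_log two_pos, ENNReal.ofReal_inv_of_pos two_pos, ENNReal.ofReal_ofNat]
  refine ⟨max a 0 + t, fun n => ?_⟩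
  set m := ∫ y, truncation g n y ∂ν
  have hlow := (hconc (fun x => -truncation g n x)
    ⟨n, fun x => (abs_neg (truncation g n x)).trans_le (abs_truncation_le_natCast g n x)⟩
    (hg.truncation n).neg).measure_le_integral_sub ht
  obtain ⟨x, hxa, hxm⟩ : ∃ x, g x ≤ a ∧ m - t < truncation g n x := by
    by_contra! hcon
    have hcover : univ ⊆ {x | a < g x} ∪ {x | truncation g n x ≤ m - t} :=
      fun x _ => (le_or_gt (g x) a).imp_left (hcon x) |>.symm
    have hsum := (measure_mono (μ := ν) hcover).trans (measure_union_le _ _)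
    rw [measure_univ] at hsum
    exact hsum.not_gt ((ENNReal.add_lt_add_of_lt_of_le (by simp) ha (hlow.trans_eq hhalf)).trans_eq
      ENNReal.inv_two_add_inv_two)
  linarith [truncation_le_of_le g n x (le_max_right a 0) (hxa.trans (le_max_left a 0))]

lemma HasGaussianConcentration.exists_measure_add_le_le
    (hconc : HasGaussianConcentration ν K) (hK : 0 < K) {g : X → ℝ}
    (hg : LipschitzWith 1 g) :
    ∃ C, ∀ t > (0 : ℝ), ν {x | C + t ≤ g x} ≤ ENNReal.ofReal (exp (-(t ^ 2) / K)) := by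
  obtain ⟨C, hC⟩ := hconc.exists_forall_integral_truncation_le hK hg
  refine ⟨C, fun t ht => ?_⟩
  obtain ⟨n, hn⟩ := exists_nat_ge (C + t)
  refine (measure_mono fun x (hx : C + t ≤ g x) => ?_).trans
    (hconc.hasGaussianUpperTail_truncation hg n t ht)
  show _ + t ≤ truncation g n x
  linarith [hC n, min_le_truncation g n x, le_min hx hn]

lemma HasGaussianConcentration.exists_measure_add_le_abs_le
    (hconc : HasGaussianConcentration ν K) (hK : 0 < K) {g : X → ℝ}
    (hg : LipschitzWith 1 g) :
    ∃ C, ∀ t > (0 : ℝ),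
      ν {x | C + t ≤ |g x|} ≤ ENNReal.ofReal (2 * exp (-(t ^ 2) / K)) := by
  obtain ⟨C₁, h₁⟩ := hconc.exists_measure_add_le_le hK hg
  obtain ⟨C₂, h₂⟩ := hconc.exists_measure_add_le_le hK hg.neg
  refine ⟨max C₁ C₂, fun t ht => ?_⟩
  have hsplit :
      {x | max C₁ C₂ + t ≤ |g x|} ⊆ {x | C₁ + t ≤ g x} ∪ {x | C₂ + t ≤ -g x} := by
    intro x (hx : _ ≤ |g x|)
    rcases le_abs'.1 hx with hx | hx
    · right; show C₂ + t ≤ -g x; linarith [le_max_right C₁ C₂]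
    · left; show C₁ + t ≤ g x; linarith [le_max_left C₁ C₂]
  calc ν {x | max C₁ C₂ + t ≤ |g x|}
      ≤ ν {x | C₁ + t ≤ g x} + ν {x | C₂ + t ≤ -g x} :=
        (measure_mono hsplit).trans (measure_union_le _ _)
    _ ≤ ENNReal.ofReal (exp (-(t ^ 2) / K)) + ENNReal.ofReal (exp (-(t ^ 2) / K)) :=
        add_le_add (h₁ t ht) (h₂ t ht)
    _ = ENNReal.ofReal (2 * exp (-(t ^ 2) / K)) := by
        rw [← ENNReal.ofReal_add (exp_pos _).le (exp_pos _).le, two_mul]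

end Concentration

theorem stmt17_general
    {H : Type*} [NormedAddCommGroup H] [MeasurableSpace H] [BorelSpace H]
    (ν : Measure H) [IsProbabilityMeasure ν]
    (K : ℝ) (hK : 0 < K)
    (h : ∀ h : H → ℝ, (∃ M, ∀ x, |h x| ≤ M) → LipschitzWith 1 h →
      ∀ t > (0 : ℝ),
        ν {x | (∫ y, h y ∂ν) + t ≤ h x} ≤ ENNReal.ofReal (Real.exp (-(t ^ 2) / K))) :
    ∀ g : H → ℝ, LipschitzWith 1 g →
      (∀ p : ℝ, 1 ≤ p → MemLp g (ENNReal.ofReal p) ν) ∧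
      ∀ t > (0 : ℝ),
        ν {x | (∫ y, g y ∂ν) + t ≤ g x} ≤ ENNReal.ofReal (Real.exp (-(t ^ 2) / K)) := by
  intro g hg
  have hconc : HasGaussianConcentration ν K := h
  obtain ⟨C, hC⟩ := hconc.exists_measure_add_le_abs_le hK hg
  have hLp (p : ℝ) (hp : 1 ≤ p) : MemLp g (ENNReal.ofReal p) ν :=
    memLp_of_measure_add_le_abs hg.continuous.measurable hK hC (by linarith)
  have hint : Integrable g ν := memLp_one_iff_integrable.1 (by simpa using hLp 1 le_rfl)
  exact ⟨hLp, hconc.hasGaussianUpperTail_of_integrable hg hint⟩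

/-- Extension of Gaussian tail bounds from bounded to unbounded Lipschitz functions:
if every bounded 1-Lipschitz `h` satisfies `ν({h ≥ m_ν(h) + t}) ≤ exp(−t²/K)` for every
`t > 0`, then every 1-Lipschitz `g` belongs to `L^p(H,ν)` for every `p ≥ 1` and
satisfies the same tail bound. -/
theorem stmt17
    {H : Type*} [NormedAddCommGroup H] [InnerProductSpace ℝ H] [CompleteSpace H]
    [SecondCountableTopology H] [MeasurableSpace H] [BorelSpace H]
    (ν : Measure H) [IsProbabilityMeasure ν]
    (K : ℝ) (hK : 0 < K)
    (h : ∀ h : H → ℝ, (∃ M, ∀ x, |h x| ≤ M) → LipschitzWith 1 h →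
      ∀ t > (0 : ℝ),
        ν {x | (∫ y, h y ∂ν) + t ≤ h x} ≤ ENNReal.ofReal (Real.exp (-(t ^ 2) / K))) :
    ∀ g : H → ℝ, LipschitzWith 1 g →
      (∀ p : ℝ, 1 ≤ p → MemLp g (ENNReal.ofReal p) ν) ∧
      ∀ t > (0 : ℝ),
        ν {x | (∫ y, g y ∂ν) + t ≤ g x} ≤ ENNReal.ofReal (Real.exp (-(t ^ 2) / K)) :=
  stmt17_general ν K hK h
end
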